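/- arXiv:2208.04827 — 7 statements merged into one kernel-verified Lean document; each statement's English description precedes it below -/
import Mathlib

section
/- Let q ≡ 3 (mod 4) be a prime power and E ⊆ 𝔽_q² with |E| ≥ Cq for a sufficiently large absolute constant C. Then for each nonzero square r ∈ 𝔽_q, the number of quadruples (a,b,c,d) ∈ E⁴ with ‖a−b‖ = r‖c−d‖ ≠ 0 is at least c|E|⁴/q for an absolute constant c > 0. In particular, every square of 𝔽_q belongs to Δ(E)/Δ(E). -/
/-!
Since `-1` is not a square, `𝔽_q²` is the field `𝔽_q[i]` and `‖·‖` is its norm, which is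
multiplicative and vanishes only at `0`. For each of the at least `q + 1` elements `g` of norm `r`,
the quadruples with `a - b = g (c - d)` are the collisions of `(a, c) ↦ a - g c` on `E × E`, so
Cauchy–Schwarz gives at least `|E|⁴ / q²` of them, of which at most `|E|²` have `c = d`. Different
`g` give disjoint families of quadruples with `‖a - b‖ = r ‖c - d‖ ≠ 0`, and summing over `g`
gives `3 |E|⁴ / (4q)` once `|E| ≥ 2q`.
-/

open Finset

section Collisions

variable {α β : Type*} [DecidableEq β] [Fintype β]

lemma card_filter_eq_eq_sum_sq (s : Finset α) (f : α → β) :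
    #{p ∈ s ×ˢ s | f p.1 = f p.2} = ∑ b, #{x ∈ s | f x = b} ^ 2 := by
  rw [card_eq_sum_card_fiberwise (f := fun p => f p.1) (t := univ) (fun _ _ => mem_univ _)]
  refine sum_congr rfl fun b _ => ?_
  rw [sq, ← card_product]
  congr 1
  ext p
  simp only [mem_filter, mem_product]
  constructor
  · rintro ⟨⟨⟨h1, h2⟩, h⟩, rfl⟩
    exact ⟨⟨h1, rfl⟩, h2, h.symm⟩
  · rintro ⟨⟨h1, rfl⟩, h2, h⟩
    exact ⟨⟨⟨h1, h2⟩, h.symm⟩, rfl⟩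

lemma card_sq_le_card_mul_card_filter_eq (s : Finset α) (f : α → β) :
    #s ^ 2 ≤ Fintype.card β * #{p ∈ s ×ˢ s | f p.1 = f p.2} := by
  rw [card_filter_eq_eq_sum_sq, card_eq_sum_card_fiberwise (f := f) (t := univ)
    (fun _ _ => mem_univ _)]
  exact sq_sum_le_card_mul_sum_sq

end Collisions

section AddCommGroup

variable {G : Type*} [AddCommGroup G] [DecidableEq G]

lemma card_pow_four_le_card_mul_card_sub_eq_map_sub [Fintype G] (φ : G →+ G) (E : Finset G) :
    #E ^ 4 ≤ Fintype.card G *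
      #{x ∈ (E ×ˢ E) ×ˢ (E ×ˢ E) | x.1.1 - x.1.2 = φ (x.2.1 - x.2.2)} := by
  have key := card_sq_le_card_mul_card_filter_eq (E ×ˢ E) fun p => p.1 - φ p.2
  rw [card_product, ← sq, ← pow_mul] at key
  convert key using 2
  refine card_equiv (.prodProdProdComm _ _ _ _) fun x => ?_
  simp only [mem_filter, mem_product, Equiv.prodProdProdComm_apply, map_sub]
  rw [sub_eq_sub_iff_sub_eq_sub]
  tauto

lemma card_sub_eq_map_sub_le (φ : G →+ G) (E : Finset G) :
    #{x ∈ (E ×ˢ E) ×ˢ (E ×ˢ E) | x.1.1 - x.1.2 = φ (x.2.1 - x.2.2)} ≤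
      #{x ∈ (E ×ˢ E) ×ˢ (E ×ˢ E) | x.1.1 - x.1.2 = φ (x.2.1 - x.2.2) ∧ x.2.1 ≠ x.2.2} +
        #E ^ 2 := by
  rw [← card_filter_add_card_filter_not (s := filter _ _) (fun x => x.2.1 ≠ x.2.2), filter_filter,
    filter_filter, sq, ← card_product]
  gcongr 1
  refine card_le_card_of_injOn (fun x => (x.1.1, x.2.1)) ?_ ?_
  · intro x hx
    simp only [coe_filter, mem_product] at hx
    simp [hx.1.1.1, hx.1.2.1]
  · rintro ⟨⟨a, b⟩, c, d⟩ h ⟨⟨a', b'⟩, c', d'⟩ h' heq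
    simp only [coe_filter, mem_product, not_not, Set.mem_ofPred_eq] at h h'
    simp only [Prod.mk.injEq] at heq ⊢
    obtain ⟨rfl, rfl⟩ := heq
    obtain ⟨-, hab, rfl⟩ := h
    obtain ⟨-, hab', rfl⟩ := h'
    simp only [sub_self, map_zero, sub_eq_zero] at hab hab'
    exact ⟨⟨rfl, hab.symm.trans hab'⟩, rfl, rfl⟩

end AddCommGroup

lemma FiniteField.exists_sq_add_sq {F : Type*} [Field F] [Fintype F] (t : F) :
    ∃ a b : F, a ^ 2 + b ^ 2 = t := by
  by_cases hF : ringChar F = 2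
  · obtain ⟨a, rfl⟩ := FiniteField.isSquare_of_char_two hF t
    exact ⟨a, 0, by ring⟩
  · obtain ⟨a, b, hab⟩ := FiniteField.exists_root_sum_quadratic (f := Polynomial.X ^ 2)
      (g := Polynomial.X ^ 2 - Polynomial.C t) (Polynomial.degree_X_pow 2)
      (Polynomial.degree_X_pow_sub_C two_pos t) (FiniteField.odd_card_of_char_ne_two hF)
    refine ⟨a, b, ?_⟩
    simp only [Polynomial.eval_pow, Polynomial.eval_X, Polynomial.eval_sub,
      Polynomial.eval_C] at hab
    linear_combination hab

namespace FinitePlane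

section CommRing

variable {R : Type*} [CommRing R]

def normSq (v : Fin 2 → R) : R := v 0 ^ 2 + v 1 ^ 2

/-- The product of `v 0 + v 1 i` and `w 0 + w 1 i` in `R[i]`, on coordinate vectors. -/
def cmul (v w : Fin 2 → R) : Fin 2 → R := ![v 0 * w 0 - v 1 * w 1, v 0 * w 1 + v 1 * w 0]

lemma normSq_cmul (v w : Fin 2 → R) : normSq (cmul v w) = normSq v * normSq w := by
  simp only [normSq, cmul, Matrix.cons_val_zero, Matrix.cons_val_one]
  ring

lemma cmul_add (g v w : Fin 2 → R) : cmul g (v + w) = cmul g v + cmul g w := by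
  ext i; fin_cases i <;> simp [cmul] <;> ring

lemma sub_cmul (g g' w : Fin 2 → R) : cmul (g - g') w = cmul g w - cmul g' w := by
  ext i; fin_cases i <;> simp [cmul] <;> ring

end CommRing

section Field

variable {F : Type*} [Field F]

lemma normSq_eq_zero_iff (hF : ¬IsSquare (-1 : F)) {v : Fin 2 → F} :
    normSq v = 0 ↔ v = 0 := by
  refine ⟨fun h => ?_, fun h => by simp [h, normSq]⟩
  rw [normSq] at h
  have h1 : v 1 = 0 := by
    by_contra hv
    refine hF ⟨v 0 / v 1, ?_⟩
    field_simp
    linear_combination -h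
  have h0 : v 0 = 0 := by simpa [h1] using h
  ext i; fin_cases i <;> simp [h0, h1]

lemma normSq_ne_zero (hF : ¬IsSquare (-1 : F)) {v : Fin 2 → F} (hv : v ≠ 0) :
    normSq v ≠ 0 :=
  (normSq_eq_zero_iff hF).not.2 hv

lemma cmul_left_injective (hF : ¬IsSquare (-1 : F)) {w : Fin 2 → F} (hw : w ≠ 0) :
    Function.Injective (cmul · w) := by
  intro g g' h
  have : normSq (g - g') * normSq w = 0 := by
    rw [← normSq_cmul, sub_cmul, sub_eq_zero.2 h, normSq, Pi.zero_apply, Pi.zero_apply]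
    ring
  rw [mul_eq_zero, or_iff_left (normSq_ne_zero hF hw), normSq_eq_zero_iff hF] at this
  exact sub_eq_zero.1 this

end Field

section FiniteField

variable {F : Type*} [Field F] [Fintype F] [DecidableEq F]

lemma card_normSq_eq_le (hF : ¬IsSquare (-1 : F)) {t r : F} (ht : t ≠ 0) (hr : r ≠ 0) :
    #{v : Fin 2 → F | normSq v = t} ≤ #{v : Fin 2 → F | normSq v = r} := by
  obtain ⟨a, b, hab⟩ := FiniteField.exists_sq_add_sq (r / t)
  have hw : normSq ![a, b] = r / t := by simpa [normSq] using hab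
  have hw0 : ![a, b] ≠ 0 := fun h => div_ne_zero hr ht (by rw [← hw, h]; simp [normSq])
  refine card_le_card_of_injOn (cmul · ![a, b]) (fun v hv => ?_)
    (cmul_left_injective hF hw0).injOn
  simp only [coe_filter, mem_univ, true_and, Set.mem_ofPred_eq] at hv ⊢
  rw [normSq_cmul, hv, hw, mul_div_cancel₀ _ ht]

lemma card_add_one_le_card_normSq_eq (hF : ¬IsSquare (-1 : F)) {r : F} (hr : r ≠ 0) :
    Fintype.card F + 1 ≤ #{v : Fin 2 → F | normSq v = r} := by
  set q := Fintype.card F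
  have hfiber_zero : #{v : Fin 2 → F | normSq v = 0} = 1 := by
    simp [normSq_eq_zero_iff hF, filter_eq']
  have htotal : q ^ 2 = 1 + ∑ t ∈ univ.erase 0, #{v : Fin 2 → F | normSq v = t} := by
    rw [← hfiber_zero, add_sum_erase univ (fun t => #{v : Fin 2 → F | normSq v = t}) (mem_univ 0),
      ← card_eq_sum_card_fiberwise (f := normSq) (fun _ _ => mem_univ _), card_univ,
      Fintype.card_fun, Fintype.card_fin]
  have hsum : ∑ t ∈ univ.erase 0, #{v : Fin 2 → F | normSq v = t} ≤
      (q - 1) * #{v : Fin 2 → F | normSq v = r} :=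
    calc _ ≤ ∑ _t ∈ univ.erase (0 : F), #{v : Fin 2 → F | normSq v = r} :=
          sum_le_sum fun t ht => card_normSq_eq_le hF (ne_of_mem_erase ht) hr
      _ = (q - 1) * #{v : Fin 2 → F | normSq v = r} := by
          rw [sum_const, card_erase_of_mem (mem_univ 0), card_univ, smul_eq_mul]
  have hq : 2 ≤ q := Fintype.one_lt_card
  zify [hq.trans' one_le_two] at htotal hsum ⊢
  nlinarith

lemma card_normSq_eq_mul_card_pow_four_le (hF : ¬IsSquare (-1 : F)) (E : Finset (Fin 2 → F))
    (r : F) :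
    #{g : Fin 2 → F | normSq g = r} * #E ^ 4 ≤ Fintype.card F ^ 2 *
      (#{x ∈ (E ×ˢ E) ×ˢ (E ×ˢ E) | normSq (x.1.1 - x.1.2) = r * normSq (x.2.1 - x.2.2) ∧
        normSq (x.2.1 - x.2.2) ≠ 0} + #{g : Fin 2 → F | normSq g = r} * #E ^ 2) := by
  set G : Finset (Fin 2 → F) := {g | normSq g = r}
  set B : (Fin 2 → F) → Finset (((Fin 2 → F) × (Fin 2 → F)) × ((Fin 2 → F) × (Fin 2 → F))) :=
    fun g => {x ∈ (E ×ˢ E) ×ˢ (E ×ˢ E) | x.1.1 - x.1.2 = cmul g (x.2.1 - x.2.2) ∧ x.2.1 ≠ x.2.2}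
  have hBS : G.biUnion B ⊆ {x ∈ (E ×ˢ E) ×ˢ (E ×ˢ E) |
      normSq (x.1.1 - x.1.2) = r * normSq (x.2.1 - x.2.2) ∧ normSq (x.2.1 - x.2.2) ≠ 0} := by
    intro x hx
    simp only [G, B, mem_biUnion, mem_filter, mem_univ, true_and] at hx ⊢
    obtain ⟨g, rfl, hx, heq, hne⟩ := hx
    exact ⟨hx, by rw [heq, normSq_cmul], normSq_ne_zero hF (sub_ne_zero.2 hne)⟩
  have hdisj : (G : Set (Fin 2 → F)).PairwiseDisjoint B := by
    refine fun g _ g' _ hgg' => disjoint_left.2 fun x hx hx' => hgg' ?_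
    simp only [B, mem_filter] at hx hx'
    exact cmul_left_injective hF (sub_ne_zero.2 hx.2.2) (hx.2.1.symm.trans hx'.2.1)
  have hB : ∀ g ∈ G, #E ^ 4 ≤ Fintype.card F ^ 2 * (#(B g) + #E ^ 2) := fun g _ => by
    have := card_pow_four_le_card_mul_card_sub_eq_map_sub (.mk' (cmul g) (cmul_add g)) E
    rw [Fintype.card_fun, Fintype.card_fin] at this
    exact this.trans (Nat.mul_le_mul_left _ (card_sub_eq_map_sub_le _ E))
  calc #G * #E ^ 4 = ∑ _g ∈ G, #E ^ 4 := by rw [sum_const, smul_eq_mul]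
    _ ≤ ∑ g ∈ G, Fintype.card F ^ 2 * (#(B g) + #E ^ 2) := sum_le_sum hB
    _ = Fintype.card F ^ 2 * (#(G.biUnion B) + #G * #E ^ 2) := by
      rw [← mul_sum, sum_add_distrib, card_biUnion hdisj, sum_const, smul_eq_mul]
    _ ≤ _ := by gcongr

lemma card_pow_four_div_le_card_normSq_sub_eq (hF : ¬IsSquare (-1 : F)) (E : Finset (Fin 2 → F))
    (hE : 2 * (Fintype.card F : ℝ) ≤ #E) {r : F} (hr : r ≠ 0) :
    1 / 2 * (#E : ℝ) ^ 4 / Fintype.card F ≤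
      #{x ∈ (E ×ˢ E) ×ˢ (E ×ˢ E) | normSq (x.1.1 - x.1.2) = r * normSq (x.2.1 - x.2.2) ∧
        normSq (x.2.1 - x.2.2) ≠ 0} := by
  set q := Fintype.card F
  set S := {x ∈ (E ×ˢ E) ×ˢ (E ×ˢ E) | normSq (x.1.1 - x.1.2) = r * normSq (x.2.1 - x.2.2) ∧
    normSq (x.2.1 - x.2.2) ≠ 0}
  set X := #{g : Fin 2 → F | normSq g = r}
  have hq : (0 : ℝ) < q := by exact_mod_cast Fintype.card_pos
  have hX : (q : ℝ) ≤ X := by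
    exact_mod_cast (Nat.le_succ q).trans (card_add_one_le_card_normSq_eq hF hr)
  have hcount : (X : ℝ) * #E ^ 4 ≤ (q : ℝ) ^ 2 * (#S + X * #E ^ 2) := by
    exact_mod_cast card_normSq_eq_mul_card_pow_four_le hF E r
  have hdiag : 3 / 4 * (#E : ℝ) ^ 4 ≤ (#E : ℝ) ^ 4 - q ^ 2 * #E ^ 2 := by
    nlinarith [mul_nonneg (sq_nonneg (#E : ℝ)) (by nlinarith : (0 : ℝ) ≤ #E ^ 2 - 4 * q ^ 2)]
  have hmain : (q : ℝ) * (#E ^ 4 - q ^ 2 * #E ^ 2) ≤ q * (q * #S) := by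
    nlinarith [mul_le_mul_of_nonneg_right hX (by nlinarith : (0 : ℝ) ≤ #E ^ 4 - q ^ 2 * #E ^ 2)]
  rw [div_le_iff₀ hq]
  nlinarith [le_of_mul_le_mul_left hmain hq]

end FiniteField

end FinitePlane

open scoped Classical

theorem stmt_5 :
    ∃ C c : ℝ, 0 < C ∧ 0 < c ∧
      ∀ (Fq : Type) [Field Fq] [Fintype Fq],
        Fintype.card Fq % 4 = 3 →
        ∀ (E : Finset (Fin 2 → Fq)),
          (C * (Fintype.card Fq : ℝ) ≤ (E.card : ℝ)) →
          ∀ r : Fq, r ≠ 0 → (∃ s : Fq, r = s ^ 2) →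
            letI nsq : (Fin 2 → Fq) → Fq := fun w => w 0 ^ 2 + w 1 ^ 2
            c * (E.card : ℝ) ^ 4 / (Fintype.card Fq : ℝ) ≤
              ((((E ×ˢ E) ×ˢ (E ×ˢ E)).filter
                (fun p => nsq (p.1.1 - p.1.2) = r * nsq (p.2.1 - p.2.2) ∧
                  nsq (p.2.1 - p.2.2) ≠ 0)).card : ℝ) ∧
            (∃ a ∈ E, ∃ b ∈ E, ∃ cc ∈ E, ∃ d ∈ E,
              nsq (cc - d) ≠ 0 ∧ nsq (a - b) = r * nsq (cc - d)) := by
  refine ⟨2, 1 / 2, two_pos, one_half_pos, fun F _ _ hq E hE r hr _ => ?_⟩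
  have hF : ¬IsSquare (-1 : F) := FiniteField.isSquare_neg_one_iff.not_left.2 hq
  have hcount := FinitePlane.card_pow_four_div_le_card_normSq_sub_eq hF E hE hr
  refine ⟨hcount, ?_⟩
  have hE0 : 0 < (E.card : ℝ) := lt_of_lt_of_le (by positivity) hE
  obtain ⟨⟨⟨a, b⟩, c, d⟩, hx⟩ := card_pos.1 (Nat.cast_pos.1 (hcount.trans_lt' (by positivity)))
  simp only [mem_filter, mem_product] at hx
  exact ⟨a, hx.1.1.1, b, hx.1.1.2, c, hx.1.2.1, d, hx.1.2.2, hx.2.2, hx.2.1⟩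
end

section
/- Let q be a prime power and E ⊆ 𝔽_q². Let L²(D_E) denote the number of quadruples (u,v,x,y) ∈ E⁴ with u ≠ v, x ≠ y, such that u − v = λ(x − y) for some λ ∈ 𝔽_q \ {0}. Then |L²(D_E) − |E|⁴/q| ≤ C q²|E|² for an absolute constant C. -/
/-!
For `c ≠ 0` the solutions of `u - v = c • (x - y)` in `E⁴` are the counted quadruples with
dilation factor `c` together with the `|E|²` degenerate ones `u = v, x = y`, and distinct factors
give disjoint sets. Counting solutions with a primitive additive character `ψ` gives
`q² N_c = ∑ₘ |Ê(m)|² |Ê(c • m)|²` with `Ê(m) = ∑_{u ∈ E} ψ (m ⬝ᵥ u)`. The frequency `m = 0`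
produces the main term `(q - 1) |E|⁴ / q²`, which is `|E|⁴ / q` up to `|E|⁴ / q² ≤ q² |E|²`;
the rest, summed over `c ≠ 0`, is at most
`(∑ₘ |Ê(m)|²)² = (q² |E|)²` by Plancherel, since `c ↦ c • m` is injective for `m ≠ 0`.
-/

open scoped Classical

open Finset Complex ComplexConjugate

theorem AddChar.map_finset_sum {A M : Type*} [AddCommMonoid A] [CommMonoid M] (ψ : AddChar A M)
    {κ : Type*} (s : Finset κ) (f : κ → A) : ψ (∑ i ∈ s, f i) = ∏ i ∈ s, ψ (f i) := by
  induction s using Finset.induction_on with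
  | empty => simp
  | insert i s hi ih => rw [sum_insert hi, prod_insert hi, AddChar.map_add_eq_mul, ih]

namespace DirectionSet

section Quadruples

variable {K V : Type*} [AddCommGroup V]

noncomputable def dilationQuadruples [SMul K V] (E : Finset V) (c : K) :
    Finset ((V × V) × (V × V)) :=
  ((E ×ˢ E) ×ˢ (E ×ˢ E)).filter fun p => p.1.1 - p.1.2 = c • (p.2.1 - p.2.2)

variable (K) in
noncomputable def parallelQuadruples [Zero K] [SMul K V] (E : Finset V) :
    Finset ((V × V) × (V × V)) :=
  ((E ×ˢ E) ×ˢ (E ×ˢ E)).filter fun p =>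
    p.1.1 ≠ p.1.2 ∧ p.2.1 ≠ p.2.2 ∧ ∃ c : K, c ≠ 0 ∧ p.1.1 - p.1.2 = c • (p.2.1 - p.2.2)

variable [Field K] [Module K V] (E : Finset V)

theorem filter_dilationQuadruples_eq (c : K) :
    (dilationQuadruples E c).filter (fun p => p.2.1 = p.2.2) = E.diag ×ˢ E.diag := by
  ext ⟨⟨u, v⟩, x, y⟩
  simp only [dilationQuadruples, mem_filter, mem_product, mem_diag]
  constructor
  · rintro ⟨⟨⟨⟨hu, -⟩, hx, -⟩, huv⟩, rfl⟩
    rw [sub_self, smul_zero, sub_eq_zero] at huv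
    exact ⟨⟨hu, huv⟩, hx, rfl⟩
  · rintro ⟨⟨hu, rfl⟩, hx, rfl⟩
    simp [hu, hx]

theorem card_dilationQuadruples (c : K) :
    #(dilationQuadruples E c) =
      #((dilationQuadruples E c).filter (fun p => p.2.1 ≠ p.2.2)) + #E ^ 2 := by
  rw [← card_filter_add_card_filter_not (fun p => p.2.1 = p.2.2), filter_dilationQuadruples_eq,
    card_product, diag_card, add_comm, sq]

theorem card_parallelQuadruples [Fintype K] :
    #(parallelQuadruples K E) =
      ∑ c ∈ univ.erase (0 : K), #((dilationQuadruples E c).filter (fun p => p.2.1 ≠ p.2.2)) := by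
  have hunion : parallelQuadruples K E = (univ.erase (0 : K)).biUnion
      fun c => (dilationQuadruples E c).filter (fun p => p.2.1 ≠ p.2.2) := by
    ext p
    simp only [parallelQuadruples, dilationQuadruples, mem_biUnion, mem_filter, mem_erase,
      mem_univ, and_true]
    constructor
    · rintro ⟨hp, -, hxy, c, hc, huv⟩
      exact ⟨c, hc, ⟨hp, huv⟩, hxy⟩
    · rintro ⟨c, hc, ⟨hp, huv⟩, hxy⟩
      refine ⟨hp, fun h => hxy ?_, hxy, c, hc, huv⟩
      rw [h, sub_self, eq_comm, smul_eq_zero, sub_eq_zero] at huv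
      exact huv.resolve_left hc
  rw [hunion, card_biUnion]
  intro c _ d _ hcd
  refine disjoint_left.mpr fun p hpc hpd => hcd ?_
  simp only [dilationQuadruples, mem_filter] at hpc hpd
  exact smul_left_injective K (sub_ne_zero.mpr hpc.2) (hpc.1.2.symm.trans hpd.1.2)

theorem sum_card_dilationQuadruples [Fintype K] :
    ∑ c ∈ univ.erase (0 : K), #(dilationQuadruples E c) =
      #(parallelQuadruples K E) + (Fintype.card K - 1) * #E ^ 2 := by
  simp only [card_dilationQuadruples E, sum_add_distrib, card_parallelQuadruples, sum_const,
    card_erase_of_mem (mem_univ _), card_univ, smul_eq_mul]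

end Quadruples

section Fourier

variable {R : Type*} [CommRing R] {ι : Type*} [Fintype ι]

theorem sum_addChar_dotProduct [Fintype R] {ψ : AddChar R ℂ} (hψ : ψ.IsPrimitive) (a : ι → R) :
    ∑ m : ι → R, ψ (m ⬝ᵥ a) = if a = 0 then (Fintype.card R : ℂ) ^ Fintype.card ι else 0 := by
  calc ∑ m : ι → R, ψ (m ⬝ᵥ a) = ∏ i, ∑ t : R, ψ (t * a i) := by
        simp only [Fintype.prod_sum, dotProduct, AddChar.map_finset_sum]
    _ = _ := by
        simp only [AddChar.sum_mulShift _ hψ, Nat.cast_ite, Nat.cast_zero, Fintype.prod_ite_zero,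
          prod_const, card_univ, funext_iff, Pi.zero_apply]

variable (ψ : AddChar R ℂ) (E : Finset (ι → R))

noncomputable def charSum (m : ι → R) : ℂ := ∑ u ∈ E, ψ (m ⬝ᵥ u)

theorem charSum_zero : charSum ψ E 0 = #E := by
  simp [charSum]

theorem charSum_neg [Finite R] (m : ι → R) : charSum ψ E (-m) = conj (charSum ψ E m) := by
  have hR : 0 < ringChar R := Nat.pos_of_ne_zero (CharP.ringChar_ne_zero_of_finite R)
  simp only [charSum, map_sum, AddChar.starComp_apply hR, AddChar.inv_apply, neg_dotProduct]

theorem normSq_charSum [Finite R] (m : ι → R) :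
    (normSq (charSum ψ E m) : ℂ) = ∑ p ∈ E ×ˢ E, ψ (m ⬝ᵥ (p.1 - p.2)) := by
  rw [← mul_conj, ← charSum_neg, charSum, charSum, sum_mul_sum, sum_product]
  refine sum_congr rfl fun u _ => sum_congr rfl fun v _ => ?_
  rw [← AddChar.map_add_eq_mul, dotProduct_sub, neg_dotProduct, sub_eq_add_neg]

variable {ψ}

theorem sum_normSq_charSum [Fintype R] (hψ : ψ.IsPrimitive) :
    ∑ m, normSq (charSum ψ E m) = (Fintype.card R : ℝ) ^ Fintype.card ι * #E := by
  apply Complex.ofReal_injective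
  push_cast
  simp only [normSq_charSum, sum_comm (s := univ), sum_addChar_dotProduct hψ, sub_eq_zero]
  rw [sum_ite, sum_const_zero, add_zero, sum_const, ← diag_eq_filter, diag_card, nsmul_eq_mul,
    mul_comm]

theorem pow_card_mul_card_dilationQuadruples [Fintype R] (hψ : ψ.IsPrimitive) (c : R) :
    (Fintype.card R : ℝ) ^ Fintype.card ι * #(dilationQuadruples E c) =
      ∑ m, normSq (charSum ψ E m) * normSq (charSum ψ E (c • m)) := by
  apply Complex.ofReal_injective
  push_cast
  calc ((Fintype.card R : ℂ) ^ Fintype.card ι * #(dilationQuadruples E c))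
      = ∑ p ∈ (E ×ˢ E) ×ˢ (E ×ˢ E), ∑ m, ψ (m ⬝ᵥ (p.1.1 - p.1.2 - c • (p.2.1 - p.2.2))) := by
        simp only [sum_addChar_dotProduct hψ, sub_eq_zero, sum_ite, sum_const_zero, add_zero,
          sum_const, nsmul_eq_mul, dilationQuadruples, mul_comm]
        congr
    _ = ∑ m, ∑ p ∈ (E ×ˢ E) ×ˢ (E ×ˢ E),
          ψ (m ⬝ᵥ (p.1.1 - p.1.2)) * ψ (-(c • m) ⬝ᵥ (p.2.1 - p.2.2)) := by
        rw [sum_comm]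
        refine sum_congr rfl fun m _ => sum_congr rfl fun p _ => ?_
        rw [← AddChar.map_add_eq_mul]
        congr 1
        simp only [dotProduct_sub, dotProduct_smul, neg_dotProduct, smul_dotProduct, smul_eq_mul]
        ring
    _ = ∑ m, (normSq (charSum ψ E m) : ℂ) * normSq (charSum ψ E (-(c • m))) := by
        simp only [normSq_charSum, sum_mul_sum, sum_product (E ×ˢ E) (E ×ˢ E)]
    _ = _ := by simp only [charSum_neg, normSq_conj]

end Fourier

section FiniteField

variable {F : Type*} [Field F] [Fintype F] {ι : Type*} [Fintype ι] {ψ : AddChar F ℂ}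
  (E : Finset (ι → F))

theorem sum_normSq_charSum_smul_le (hψ : ψ.IsPrimitive) {m : ι → F} (hm : m ≠ 0) (s : Finset F) :
    ∑ c ∈ s, normSq (charSum ψ E (c • m)) ≤ (Fintype.card F : ℝ) ^ Fintype.card ι * #E := by
  rw [← sum_normSq_charSum E hψ,
    ← sum_image (f := fun w => normSq (charSum ψ E w)) fun c _ d _ h => smul_left_injective F hm h]
  exact sum_le_univ_sum_of_nonneg fun _ => normSq_nonneg _

theorem sum_sum_normSq_charSum_mul_le (hψ : ψ.IsPrimitive) :
    ∑ c ∈ univ.erase (0 : F), ∑ m ∈ univ.erase 0,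
        normSq (charSum ψ E m) * normSq (charSum ψ E (c • m)) ≤
      ((Fintype.card F : ℝ) ^ Fintype.card ι * #E) ^ 2 := by
  set B : ℝ := (Fintype.card F : ℝ) ^ Fintype.card ι * #E
  rw [sum_comm]
  calc _ ≤ ∑ m ∈ univ.erase 0, normSq (charSum ψ E m) * B := by
        refine sum_le_sum fun m hm => ?_
        rw [← mul_sum]
        exact mul_le_mul_of_nonneg_left
          (sum_normSq_charSum_smul_le E hψ (ne_of_mem_erase hm) _) (normSq_nonneg _)
    _ ≤ ∑ m, normSq (charSum ψ E m) * B :=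
        sum_le_univ_sum_of_nonneg fun m => mul_nonneg (normSq_nonneg _) (by positivity)
    _ = B ^ 2 := by rw [← sum_mul, sum_normSq_charSum E hψ, sq]

theorem pow_card_mul_card_parallelQuadruples_sub_mem_Icc (hψ : ψ.IsPrimitive) :
    (Fintype.card F : ℝ) ^ Fintype.card ι *
        (#(parallelQuadruples F E) + (Fintype.card F - 1) * #E ^ 2) -
      (Fintype.card F - 1) * #E ^ 4 ∈
      Set.Icc 0 (((Fintype.card F : ℝ) ^ Fintype.card ι * #E) ^ 2) := by
  have hcount : (#(parallelQuadruples F E) : ℝ) + (Fintype.card F - 1) * #E ^ 2 =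
      ∑ c ∈ univ.erase (0 : F), (#(dilationQuadruples E c) : ℝ) := by
    rw [← Nat.cast_pred Fintype.card_pos]
    exact_mod_cast (sum_card_dilationQuadruples (K := F) E).symm
  have hsplit (c : F) : ∑ m, normSq (charSum ψ E m) * normSq (charSum ψ E (c • m)) =
      #E ^ 4 + ∑ m ∈ univ.erase 0, normSq (charSum ψ E m) * normSq (charSum ψ E (c • m)) := by
    rw [← add_sum_erase _ _ (mem_univ 0), smul_zero, charSum_zero, normSq_natCast]
    ring
  rw [hcount, mul_sum]
  simp only [pow_card_mul_card_dilationQuadruples E hψ, hsplit, sum_add_distrib, sum_const,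
    card_erase_of_mem (mem_univ _), card_univ, nsmul_eq_mul, Nat.cast_pred Fintype.card_pos,
    add_sub_cancel_left]
  exact ⟨sum_nonneg fun c _ => sum_nonneg fun m _ => mul_nonneg (normSq_nonneg _)
    (normSq_nonneg _), sum_sum_normSq_charSum_mul_le E hψ⟩

theorem abs_card_parallelQuadruples_sub_le (E : Finset (Fin 2 → F)) :
    |(#(parallelQuadruples F E) : ℝ) - #E ^ 4 / Fintype.card F| ≤
      2 * (Fintype.card F : ℝ) ^ 2 * #E ^ 2 := by
  obtain ⟨hlow, hhigh⟩ := pow_card_mul_card_parallelQuadruples_sub_mem_Icc E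
    (AddChar.FiniteField.primitiveChar_to_Complex_isPrimitive F)
  have hq : (1 : ℝ) < Fintype.card F := mod_cast Fintype.one_lt_card
  have hE : (#E : ℝ) ≤ Fintype.card F ^ 2 := mod_cast (card_le_univ E).trans_eq (by simp)
  have he : (0 : ℝ) ≤ #E := by positivity
  rw [Fintype.card_fin] at hlow hhigh
  generalize (Fintype.card F : ℝ) = q at *
  generalize (#E : ℝ) = e at *
  generalize (#(parallelQuadruples F E) : ℝ) = L at *
  have hq0 : 0 < q ^ 2 := by positivity
  have he2 : e ^ 2 ≤ q ^ 4 := by nlinarith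
  have hdiff : L - e ^ 4 / q = (q ^ 2 * (L + (q - 1) * e ^ 2) - (q - 1) * e ^ 4 - e ^ 4 -
      q ^ 2 * (q - 1) * e ^ 2) / q ^ 2 := by
    field_simp
    ring
  rw [hdiff, abs_div, abs_of_pos hq0, div_le_iff₀ hq0, abs_le]
  constructor <;> nlinarith [mul_le_mul_of_nonneg_left he2 (sq_nonneg e)]

end FiniteField

end DirectionSet

theorem stmt_7 :
    ∃ C : ℝ, 0 < C ∧
      ∀ (Fq : Type) [Field Fq] [Fintype Fq], ∀ (E : Finset (Fin 2 → Fq)),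
        |((((E ×ˢ E) ×ˢ (E ×ˢ E)).filter
            (fun p : ((Fin 2 → Fq) × (Fin 2 → Fq)) × ((Fin 2 → Fq) × (Fin 2 → Fq)) =>
              p.1.1 ≠ p.1.2 ∧ p.2.1 ≠ p.2.2 ∧
              ∃ lam : Fq, lam ≠ 0 ∧ p.1.1 - p.1.2 = lam • (p.2.1 - p.2.2))).card : ℝ) -
          (E.card : ℝ) ^ 4 / (Fintype.card Fq : ℝ)| ≤
        C * (Fintype.card Fq : ℝ) ^ 2 * (E.card : ℝ) ^ 2 :=
  ⟨2, two_pos, fun _ _ _ E => by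
    -- the two filters differ only in their classical decidability instances
    convert DirectionSet.abs_card_parallelQuadruples_sub_le E using 4
    unfold DirectionSet.parallelQuadruples
    congr!⟩
end

section
/- Let q be a prime power and E ⊆ 𝔽_q² with |E| ≥ Cq^{3/2} for a sufficiently large absolute constant C. Then the set of directions spanned by E, i.e. {u − v : u,v ∈ E, u ≠ v} considered up to nonzero scalar multiples, has size at least cq for an absolute constant c > 0. -/
/-!
Once `|E| > q`, every non-vertical direction `(1, a)` occurs: the linear form
`x ↦ x₁ - a x₀` takes only `q` values on `E`, so two distinct points of `E` share its value,
and their difference is then a nonzero multiple of `(1, a)`. These `q` lines are distinct, and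
`C q^{3/2} ≥ q^{3/2} > q` for `C = 1`.
-/

open scoped Classical

section Directions

variable (K : Type*) {V : Type*} [DivisionRing K] [AddCommGroup V] [Module K V]

noncomputable def directions (E : Finset V) : Finset (Submodule K V) :=
  ((E ×ˢ E).filter (fun p => p.1 ≠ p.2)).image (fun p => K ∙ (p.1 - p.2))

variable {K}

lemma span_mem_directions {E : Finset V} {u v w : V} (hu : u ∈ E) (hv : v ∈ E) (huv : u ≠ v)
    {c : K} (hc : c ≠ 0) (h : u - v = c • w) : (K ∙ w) ∈ directions K E := by
  refine Finset.mem_image.mpr ⟨(u, v), by simp [hu, hv, huv], ?_⟩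
  simp only [h, Submodule.span_singleton_smul_eq (IsUnit.mk0 c hc)]

end Directions

section Plane

variable {K : Type*} [Field K]

lemma eq_smul_of_apply_one_eq_mul {x : Fin 2 → K} {a : K} (h : x 1 = a * x 0) :
    x = x 0 • ![1, a] := by
  ext i
  fin_cases i <;> simp [h, mul_comm]

lemma span_slope_injective : Function.Injective (fun a : K => K ∙ ![1, a]) := by
  intro a b hab
  have hb : ![1, b] ∈ K ∙ ![1, a] := by
    simp only at hab
    exact hab ▸ Submodule.mem_span_singleton_self _
  obtain ⟨t, ht⟩ := Submodule.mem_span_singleton.mp hb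
  have ht₀ : t = 1 := by simpa using congrFun ht 0
  simpa [ht₀] using congrFun ht 1

variable [Fintype K]

lemma span_slope_mem_directions {E : Finset (Fin 2 → K)} (hE : Fintype.card K < E.card)
    (a : K) : (K ∙ ![1, a]) ∈ directions K E := by
  obtain ⟨u, hu, v, hv, huv, hval⟩ :=
    Finset.exists_ne_map_eq_of_card_lt_of_maps_to (t := Finset.univ)
      (f := fun x : Fin 2 → K => x 1 - a * x 0) (by simpa using hE) (fun x _ => by simp)
  have hdiff : u - v = (u - v) 0 • ![1, a] :=
    eq_smul_of_apply_one_eq_mul (by simp only [Pi.sub_apply]; linear_combination hval)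
  have hc : (u - v) 0 ≠ 0 := fun h0 => huv (sub_eq_zero.mp (by rw [hdiff, h0, zero_smul]))
  exact span_mem_directions hu hv huv hc hdiff

lemma card_le_card_directions {E : Finset (Fin 2 → K)} (hE : Fintype.card K < E.card) :
    Fintype.card K ≤ (directions K E).card := by
  rw [← Finset.card_univ]
  exact Finset.card_le_card_of_injOn (fun a : K => K ∙ ![1, a])
    (fun a _ => span_slope_mem_directions hE a) span_slope_injective.injOn

end Plane

theorem stmt_8 :
    ∃ C c : ℝ, 0 < C ∧ 0 < c ∧
      ∀ (Fq : Type) [Field Fq] [Fintype Fq], ∀ (E : Finset (Fin 2 → Fq)),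
        (C * (Fintype.card Fq : ℝ) ^ ((3 : ℝ) / 2) ≤ (E.card : ℝ)) →
        c * (Fintype.card Fq : ℝ) ≤
          ((((E ×ˢ E).filter (fun p => p.1 ≠ p.2)).image
            (fun p => Submodule.span Fq {p.1 - p.2})).card : ℝ) := by
  refine ⟨1, 1, one_pos, one_pos, fun Fq _ _ E hE => ?_⟩
  rw [one_mul] at hE ⊢
  have hq : (1 : ℝ) < Fintype.card Fq := by exact_mod_cast Fintype.one_lt_card
  have hq_lt : (Fintype.card Fq : ℝ) < Fintype.card Fq ^ ((3 : ℝ) / 2) := by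
    simpa using Real.rpow_lt_rpow_of_exponent_lt hq (by norm_num : (1 : ℝ) < 3 / 2)
  have h := card_le_card_directions (E := E) (by exact_mod_cast hq_lt.trans_le hE)
  rw [directions] at h
  exact_mod_cast h
end

section
/- Let q be a prime power and E ⊆ 𝔽_q². Let L²(S_E) denote the number of 8-tuples (u₁,v₁,u₂,v₂,u₃,v₃,u₄,v₄) ∈ E⁸ for which there exists λ ∈ 𝔽_q \ {0} with u₁ − v₁ = λ(u₂ − v₂) and u₃ − v₃ = λ(u₄ − v₄). Then |L²(S_E) − |E|⁸/q³| ≤ C(|E|⁶ + q²|E|⁵) for an absolute constant C. -/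
open scoped Classical
open Finset

section Aux

variable {Fq : Type} [Field Fq] [Fintype Fq]

noncomputable def myPsi (Fq : Type) [Field Fq] [Fintype Fq] : AddChar Fq ℂ :=
  AddChar.FiniteField.primitiveChar_to_Complex Fq
attribute [irreducible] myPsi
lemma myPsi_prim : (myPsi Fq).IsPrimitive := by
  rw [myPsi]; exact AddChar.FiniteField.primitiveChar_to_Complex_isPrimitive Fq
lemma myPsi_norm (a : Fq) : ‖myPsi Fq a‖ = 1 := by
  have hR : 0 < ringChar Fq :=
    Nat.pos_of_ne_zero (CharP.ringChar_ne_zero_of_finite Fq)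
  exact Complex.norm_eq_one_of_mem_rootsOfUnity <| (myPsi Fq).val_mem_rootsOfUnity a hR
lemma myPsi_conj (a : Fq) : (starRingEnd ℂ) (myPsi Fq a) = myPsi Fq (-a) := by
  have hR : 0 < ringChar Fq :=
    Nat.pos_of_ne_zero (CharP.ringChar_ne_zero_of_finite Fq)
  rw [AddChar.starComp_apply hR, AddChar.inv_apply]
lemma orth (x : Fin 2 → Fq) :
    ∑ ξ : Fin 2 → Fq, myPsi Fq (ξ 0 * x 0 + ξ 1 * x 1) =
      if x = 0 then ((Fintype.card Fq : ℂ)) ^ 2 else 0 := by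
  rw [← Equiv.sum_comp (piFinTwoEquiv fun _ => Fq).symm
    (fun ξ => myPsi Fq (ξ 0 * x 0 + ξ 1 * x 1))]
  simp only [piFinTwoEquiv_symm_apply, Fin.cons_zero, Fin.cons_one]
  rw [Fintype.sum_prod_type]
  simp only [AddChar.map_add_eq_mul]
  rw [← Fintype.sum_mul_sum (fun a => myPsi Fq (a * x 0)) (fun b => myPsi Fq (b * x 1))]
  rw [AddChar.sum_mulShift _ myPsi_prim, AddChar.sum_mulShift _ myPsi_prim]
  have hx : x = 0 ↔ x 0 = 0 ∧ x 1 = 0 := by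
    rw [funext_iff, Fin.forall_fin_two]; rfl
  by_cases h0 : x 0 = 0 <;> by_cases h1 : x 1 = 0 <;>
    simp [h0, h1, hx, sq]

noncomputable def Eh (E : Finset (Fin 2 → Fq)) (ξ : Fin 2 → Fq) : ℂ :=
  ∑ a ∈ E, myPsi Fq (ξ 0 * a 0 + ξ 1 * a 1)
noncomputable def Eb (E : Finset (Fin 2 → Fq)) (ξ : Fin 2 → Fq) : ℂ :=
  ∑ a ∈ E, myPsi Fq (-(ξ 0 * a 0 + ξ 1 * a 1))
lemma conj_Eh (E : Finset (Fin 2 → Fq)) (ξ : Fin 2 → Fq) :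
    (starRingEnd ℂ) (Eh E ξ) = Eb E ξ := by
  rw [Eh, Eb, map_sum]
  exact Finset.sum_congr rfl fun a _ => myPsi_conj _
lemma hmul {α β : Type*} (s : Finset α) (t : Finset β) (f : α → Fq) (g : β → Fq) :
    (∑ a ∈ s, myPsi Fq (f a)) * (∑ b ∈ t, myPsi Fq (g b)) =
      ∑ p ∈ s ×ˢ t, myPsi Fq (f p.1 + g p.2) := by
  rw [Finset.sum_mul_sum, Finset.sum_product]
  simp [AddChar.map_add_eq_mul]

lemma F_nonneg (E : Finset (Fin 2 → Fq)) (ξ : Fin 2 → Fq) :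
    0 ≤ Complex.normSq (Eh E ξ) := Complex.normSq_nonneg _

lemma F_zero (E : Finset (Fin 2 → Fq)) :
    Complex.normSq (Eh E 0) = (E.card : ℝ) ^ 2 := by
  have : Eh E (0 : Fin 2 → Fq) = (E.card : ℂ) := by
    rw [Eh]
    simp
  rw [this]
  simp [Complex.normSq_natCast, sq]

lemma F_le (E : Finset (Fin 2 → Fq)) (ξ : Fin 2 → Fq) :
    Complex.normSq (Eh E ξ) ≤ (E.card : ℝ) ^ 2 := by
  have h1 : ‖Eh E ξ‖ ≤ (E.card : ℝ) := by
    rw [Eh]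
    calc ‖∑ a ∈ E, myPsi Fq (ξ 0 * a 0 + ξ 1 * a 1)‖
        ≤ ∑ a ∈ E, ‖myPsi Fq (ξ 0 * a 0 + ξ 1 * a 1)‖ := norm_sum_le _ _
      _ = (E.card : ℝ) := by simp [myPsi_norm]
  have h2 : Complex.normSq (Eh E ξ) = ‖Eh E ξ‖ ^ 2 := by
    rw [Complex.normSq_eq_norm_sq]
  rw [h2]
  exact pow_le_pow_left₀ (norm_nonneg _) h1 2

lemma planch (E : Finset (Fin 2 → Fq)) :
    ∑ ξ : Fin 2 → Fq, Complex.normSq (Eh E ξ) = (Fintype.card Fq : ℝ) ^ 2 * E.card := by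
  have hC : (∑ ξ : Fin 2 → Fq, (Complex.normSq (Eh E ξ) : ℂ))
      = ((Fintype.card Fq : ℂ)) ^ 2 * (E.card : ℂ) := by
    have hpt : ∀ ξ : Fin 2 → Fq, (Complex.normSq (Eh E ξ) : ℂ)
        = ∑ p ∈ E ×ˢ E, myPsi Fq (ξ 0 * (p.1 - p.2) 0 + ξ 1 * (p.1 - p.2) 1) := by
      intro ξ
      have h1 : (Complex.normSq (Eh E ξ) : ℂ) = Eh E ξ * Eb E ξ := by
        rw [← conj_Eh, Complex.mul_conj]
      rw [h1, Eh, Eb, hmul]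
      refine Finset.sum_congr rfl fun p _ => ?_
      congr 1
      simp only [Pi.sub_apply]
      ring
    rw [Finset.sum_congr rfl (fun ξ _ => hpt ξ), Finset.sum_comm]
    have horth : ∀ p ∈ E ×ˢ E,
        (∑ ξ : Fin 2 → Fq, myPsi Fq (ξ 0 * (p.1 - p.2) 0 + ξ 1 * (p.1 - p.2) 1))
          = if p.1 = p.2 then ((Fintype.card Fq : ℂ)) ^ 2 else 0 := by
      intro p _
      rw [orth]
      congr 1
      rw [sub_eq_zero]
    rw [Finset.sum_congr rfl horth, ← Finset.sum_filter, Finset.sum_const, nsmul_eq_mul]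
    have hdiag : ((E ×ˢ E).filter (fun x : (Fin 2 → Fq) × (Fin 2 → Fq) => x.1 = x.2))
        = E.diag := by
      ext x
      simp only [Finset.mem_filter, Finset.mem_product, Finset.mem_diag]
      constructor
      · rintro ⟨⟨h1, _⟩, h3⟩; exact ⟨h1, h3⟩
      · rintro ⟨h1, h3⟩; exact ⟨⟨h1, h3 ▸ h1⟩, h3⟩
    rw [hdiag, Finset.diag_card, mul_comm]
  have h2 : ((∑ ξ : Fin 2 → Fq, Complex.normSq (Eh E ξ) : ℝ) : ℂ)
      = (((Fintype.card Fq : ℝ) ^ 2 * (E.card : ℝ) : ℝ) : ℂ) := by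
    push_cast
    exact hC
  exact Complex.ofReal_injective h2

lemma reindex_smul (f : (Fin 2 → Fq) → ℝ) {l : Fq} (hl : l ≠ 0) :
    ∑ ξ : Fin 2 → Fq, f (l • ξ) = ∑ ξ : Fin 2 → Fq, f ξ := by
  apply Fintype.sum_bijective (fun ξ : Fin 2 → Fq => l • ξ)
  · exact (Finite.injective_iff_bijective).mp (smul_right_injective (Fin 2 → Fq) hl)
  · intro x; rfl

lemma sum_smul_le (f : (Fin 2 → Fq) → ℝ) (hf : ∀ ξ, 0 ≤ f ξ) {ξ : Fin 2 → Fq} (hξ : ξ ≠ 0) :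
    ∑ l : Fq, f (l • ξ) ≤ ∑ η : Fin 2 → Fq, f η := by
  have h1 : (∑ l : Fq, f (l • ξ)) = ∑ η ∈ Finset.univ.image (fun l : Fq => l • ξ), f η :=
    (Finset.sum_image (fun a _ b _ h => smul_left_injective Fq hξ h)).symm
  rw [h1]
  exact Finset.sum_le_sum_of_subset_of_nonneg (Finset.subset_univ _) (fun η _ _ => hf η)

lemma pointwise (E : Finset (Fin 2 → Fq)) (l : Fq) (ξ : Fin 2 → Fq) :
    (Complex.normSq (Eh E ξ) : ℂ) * (Complex.normSq (Eh E (l • ξ)) : ℂ) =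
      ∑ p ∈ (E ×ˢ E) ×ˢ (E ×ˢ E),
        myPsi Fq (ξ 0 * (p.1.1 - p.1.2 - l • (p.2.1 - p.2.2)) 0 +
                  ξ 1 * (p.1.1 - p.1.2 - l • (p.2.1 - p.2.2)) 1) := by
  have h1 : (Complex.normSq (Eh E ξ) : ℂ) = Eh E ξ * Eb E ξ := by
    rw [← conj_Eh, Complex.mul_conj]
  have h2 : (Complex.normSq (Eh E (l • ξ)) : ℂ) = Eb E (l • ξ) * Eh E (l • ξ) := by
    rw [← conj_Eh, mul_comm, Complex.mul_conj]
  rw [h1, h2, Eh, Eb, Eh, Eb, hmul, hmul, hmul]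
  refine Finset.sum_congr rfl fun p _ => ?_
  congr 1
  simp only [Pi.sub_apply, Pi.smul_apply, smul_eq_mul]
  ring

lemma key (E : Finset (Fin 2 → Fq)) (l : Fq) :
    ((Fintype.card Fq : ℝ)) ^ 2 *
      ((((E ×ˢ E) ×ˢ (E ×ˢ E)).filter
        (fun p => p.1.1 - p.1.2 = l • (p.2.1 - p.2.2))).card : ℝ) =
    ∑ ξ : Fin 2 → Fq, Complex.normSq (Eh E ξ) * Complex.normSq (Eh E (l • ξ)) := by
  have hC : (∑ ξ : Fin 2 → Fq,
      (Complex.normSq (Eh E ξ) : ℂ) * (Complex.normSq (Eh E (l • ξ)) : ℂ)) =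
      ((Fintype.card Fq : ℂ)) ^ 2 *
      ((((E ×ˢ E) ×ˢ (E ×ˢ E)).filter
        (fun p => p.1.1 - p.1.2 = l • (p.2.1 - p.2.2))).card : ℂ) := by
    simp_rw [pointwise E l]
    rw [Finset.sum_comm]
    have : ∀ p ∈ (E ×ˢ E) ×ˢ (E ×ˢ E),
        (∑ ξ : Fin 2 → Fq, myPsi Fq (ξ 0 * (p.1.1 - p.1.2 - l • (p.2.1 - p.2.2)) 0 +
          ξ 1 * (p.1.1 - p.1.2 - l • (p.2.1 - p.2.2)) 1)) =
        if p.1.1 - p.1.2 = l • (p.2.1 - p.2.2) then ((Fintype.card Fq : ℂ)) ^ 2 else 0 := by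
      intro p _
      rw [orth]
      congr 1
      rw [sub_eq_zero]
    rw [Finset.sum_congr rfl this, ← Finset.sum_filter, Finset.sum_const, nsmul_eq_mul, mul_comm]
  have h2 : ((∑ ξ : Fin 2 → Fq, Complex.normSq (Eh E ξ) * Complex.normSq (Eh E (l • ξ)) : ℝ) : ℂ)
      = ((((Fintype.card Fq : ℝ)) ^ 2 *
      ((((E ×ˢ E) ×ˢ (E ×ˢ E)).filter
        (fun p => p.1.1 - p.1.2 = l • (p.2.1 - p.2.2))).card : ℝ) : ℝ) : ℂ) := by
    push_cast
    exact hC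
  exact (Complex.ofReal_injective h2).symm




lemma count_id (E : Finset (Fin 2 → Fq)) :
    (∑ l ∈ Finset.univ.erase (0:Fq),
        ((((E ×ˢ E) ×ˢ (E ×ˢ E)).filter
          (fun p => p.1.1 - p.1.2 = l • (p.2.1 - p.2.2))).card *
         (((E ×ˢ E) ×ˢ (E ×ˢ E)).filter
          (fun p => p.1.1 - p.1.2 = l • (p.2.1 - p.2.2))).card))
      + E.card ^ 4
    = ((((E ×ˢ E) ×ˢ (E ×ˢ E)) ×ˢ ((E ×ˢ E) ×ˢ (E ×ˢ E))).filter
        (fun p => ∃ lam : Fq, lam ≠ 0 ∧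
          p.1.1.1 - p.1.1.2 = lam • (p.1.2.1 - p.1.2.2) ∧
          p.2.1.1 - p.2.1.2 = lam • (p.2.2.1 - p.2.2.2))).card
      + (Fintype.card Fq - 1) * E.card ^ 4 := by
  classical
  -- step 1 : product of cards
  have step1 : ∀ l : Fq,
      (((E ×ˢ E) ×ˢ (E ×ˢ E)).filter
          (fun p => p.1.1 - p.1.2 = l • (p.2.1 - p.2.2))).card *
        (((E ×ˢ E) ×ˢ (E ×ˢ E)).filter
          (fun p => p.1.1 - p.1.2 = l • (p.2.1 - p.2.2))).card
      = ((((E ×ˢ E) ×ˢ (E ×ˢ E)) ×ˢ ((E ×ˢ E) ×ˢ (E ×ˢ E))).filter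
          (fun p => (p.1.1.1 - p.1.1.2 = l • (p.1.2.1 - p.1.2.2)) ∧
                    (p.2.1.1 - p.2.1.2 = l • (p.2.2.1 - p.2.2.2)))).card := by
    intro l
    rw [Finset.filter_product
      (fun x : ((Fin 2 → Fq) × (Fin 2 → Fq)) × ((Fin 2 → Fq) × (Fin 2 → Fq)) =>
        x.1.1 - x.1.2 = l • (x.2.1 - x.2.2))
      (fun x : ((Fin 2 → Fq) × (Fin 2 → Fq)) × ((Fin 2 → Fq) × (Fin 2 → Fq)) =>
        x.1.1 - x.1.2 = l • (x.2.1 - x.2.2)), Finset.card_product]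
  have step2 : ∑ l ∈ Finset.univ.erase (0:Fq),
      ((((E ×ˢ E) ×ˢ (E ×ˢ E)) ×ˢ ((E ×ˢ E) ×ˢ (E ×ˢ E))).filter
          (fun p => (p.1.1.1 - p.1.1.2 = l • (p.1.2.1 - p.1.2.2)) ∧
                    (p.2.1.1 - p.2.1.2 = l • (p.2.2.1 - p.2.2.2)))).card
      = ∑ p ∈ (((E ×ˢ E) ×ˢ (E ×ˢ E)) ×ˢ ((E ×ˢ E) ×ˢ (E ×ˢ E))),
          ((Finset.univ.erase (0:Fq)).filter
            (fun l => (p.1.1.1 - p.1.1.2 = l • (p.1.2.1 - p.1.2.2)) ∧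
                      (p.2.1.1 - p.2.1.2 = l • (p.2.2.1 - p.2.2.2)))).card := by
    simp_rw [Finset.card_filter]
    rw [Finset.sum_comm]
  -- restrict to pred
  have step3 : ∑ p ∈ (((E ×ˢ E) ×ˢ (E ×ˢ E)) ×ˢ ((E ×ˢ E) ×ˢ (E ×ˢ E))),
          ((Finset.univ.erase (0:Fq)).filter
            (fun l => (p.1.1.1 - p.1.1.2 = l • (p.1.2.1 - p.1.2.2)) ∧
                      (p.2.1.1 - p.2.1.2 = l • (p.2.2.1 - p.2.2.2)))).card
      = ∑ p ∈ ((((E ×ˢ E) ×ˢ (E ×ˢ E)) ×ˢ ((E ×ˢ E) ×ˢ (E ×ˢ E))).filter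
        (fun p => ∃ lam : Fq, lam ≠ 0 ∧
          p.1.1.1 - p.1.1.2 = lam • (p.1.2.1 - p.1.2.2) ∧
          p.2.1.1 - p.2.1.2 = lam • (p.2.2.1 - p.2.2.2))),
          ((Finset.univ.erase (0:Fq)).filter
            (fun l => (p.1.1.1 - p.1.1.2 = l • (p.1.2.1 - p.1.2.2)) ∧
                      (p.2.1.1 - p.2.1.2 = l • (p.2.2.1 - p.2.2.2)))).card := by
    refine (Finset.sum_subset (Finset.filter_subset _ _) ?_).symm
    intro p hp hnp
    rw [Finset.card_eq_zero, Finset.filter_eq_empty_iff]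
    intro l hl
    rintro ⟨h1, h2⟩
    exact hnp (Finset.mem_filter.mpr ⟨hp, ⟨l, (Finset.mem_erase.mp hl).1, h1, h2⟩⟩)
  -- value of the counting function on degenerate tuples
  have hdegn : ∀ p : (((Fin 2 → Fq) × (Fin 2 → Fq)) × ((Fin 2 → Fq) × (Fin 2 → Fq))) ×
      (((Fin 2 → Fq) × (Fin 2 → Fq)) × ((Fin 2 → Fq) × (Fin 2 → Fq))),
      ((p.1.1.1 = p.1.1.2 ∧ p.1.2.1 = p.1.2.2) ∧ (p.2.1.1 = p.2.1.2 ∧ p.2.2.1 = p.2.2.2)) →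
      ((Finset.univ.erase (0:Fq)).filter
            (fun l => (p.1.1.1 - p.1.1.2 = l • (p.1.2.1 - p.1.2.2)) ∧
                      (p.2.1.1 - p.2.1.2 = l • (p.2.2.1 - p.2.2.2)))).card
        = Fintype.card Fq - 1 := by
    intro p hp
    rw [Finset.filter_true_of_mem, Finset.card_erase_of_mem (Finset.mem_univ _),
      Finset.card_univ]
    intro l _
    obtain ⟨⟨ha, hb⟩, hc, hd⟩ := hp
    constructor
    · simp [sub_eq_zero.mpr ha, sub_eq_zero.mpr hb]
    · simp [sub_eq_zero.mpr hc, sub_eq_zero.mpr hd]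
  -- value of the counting function on nondegenerate tuples
  have huniq : ∀ p ∈ ((((E ×ˢ E) ×ˢ (E ×ˢ E)) ×ˢ ((E ×ˢ E) ×ˢ (E ×ˢ E))).filter
        (fun p => ∃ lam : Fq, lam ≠ 0 ∧
          p.1.1.1 - p.1.1.2 = lam • (p.1.2.1 - p.1.2.2) ∧
          p.2.1.1 - p.2.1.2 = lam • (p.2.2.1 - p.2.2.2))),
      ¬ ((p.1.1.1 = p.1.1.2 ∧ p.1.2.1 = p.1.2.2) ∧ (p.2.1.1 = p.2.1.2 ∧ p.2.2.1 = p.2.2.2)) →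
      ((Finset.univ.erase (0:Fq)).filter
            (fun l => (p.1.1.1 - p.1.1.2 = l • (p.1.2.1 - p.1.2.2)) ∧
                      (p.2.1.1 - p.2.1.2 = l • (p.2.2.1 - p.2.2.2)))).card = 1 := by
    intro p hp hnd
    obtain ⟨lam, hlam, h1, h2⟩ := (Finset.mem_filter.mp hp).2
    rw [Finset.card_eq_one]
    refine ⟨lam, Finset.eq_singleton_iff_unique_mem.mpr ⟨?_, ?_⟩⟩
    · exact Finset.mem_filter.mpr ⟨Finset.mem_erase.mpr ⟨hlam, Finset.mem_univ _⟩, h1, h2⟩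
    · intro l hl
      obtain ⟨hlB, hl1, hl2⟩ := Finset.mem_filter.mp hl
      by_cases hd2 : p.1.2.1 = p.1.2.2
      · by_cases hd4 : p.2.2.1 = p.2.2.2
        · exfalso
          apply hnd
          refine ⟨⟨?_, hd2⟩, ?_, hd4⟩
          · have h0 : p.1.1.1 - p.1.1.2 = 0 := by
              rw [h1, sub_eq_zero.mpr hd2, smul_zero]
            exact sub_eq_zero.mp h0
          · have h0 : p.2.1.1 - p.2.1.2 = 0 := by
              rw [h2, sub_eq_zero.mpr hd4, smul_zero]
            exact sub_eq_zero.mp h0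
        · have hv : p.2.2.1 - p.2.2.2 ≠ 0 := sub_ne_zero.mpr hd4
          exact smul_left_injective Fq hv (hl2.symm.trans h2)
      · have hv : p.1.2.1 - p.1.2.2 ≠ 0 := sub_ne_zero.mpr hd2
        exact smul_left_injective Fq hv (hl1.symm.trans h1)
  -- split the pred-sum into degenerate and nondegenerate parts
  have hsplit := Finset.sum_filter_add_sum_filter_not
    (((((E ×ˢ E) ×ˢ (E ×ˢ E)) ×ˢ ((E ×ˢ E) ×ˢ (E ×ˢ E))).filter
        (fun p => ∃ lam : Fq, lam ≠ 0 ∧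
          p.1.1.1 - p.1.1.2 = lam • (p.1.2.1 - p.1.2.2) ∧
          p.2.1.1 - p.2.1.2 = lam • (p.2.2.1 - p.2.2.2))))
    (fun p => ((p.1.1.1 = p.1.1.2 ∧ p.1.2.1 = p.1.2.2) ∧ (p.2.1.1 = p.2.1.2 ∧ p.2.2.1 = p.2.2.2)))
    (fun p => ((Finset.univ.erase (0:Fq)).filter
            (fun l => (p.1.1.1 - p.1.1.2 = l • (p.1.2.1 - p.1.2.2)) ∧
                      (p.2.1.1 - p.2.1.2 = l • (p.2.2.1 - p.2.2.2)))).card)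
  have hDegset : (((((E ×ˢ E) ×ˢ (E ×ˢ E)) ×ˢ ((E ×ˢ E) ×ˢ (E ×ˢ E))).filter
        (fun p => ∃ lam : Fq, lam ≠ 0 ∧
          p.1.1.1 - p.1.1.2 = lam • (p.1.2.1 - p.1.2.2) ∧
          p.2.1.1 - p.2.1.2 = lam • (p.2.2.1 - p.2.2.2)))).filter
      (fun p => ((p.1.1.1 = p.1.1.2 ∧ p.1.2.1 = p.1.2.2) ∧ (p.2.1.1 = p.2.1.2 ∧ p.2.2.1 = p.2.2.2)))
      = (((E ×ˢ E) ×ˢ (E ×ˢ E)) ×ˢ ((E ×ˢ E) ×ˢ (E ×ˢ E))).filter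
      (fun p => ((p.1.1.1 = p.1.1.2 ∧ p.1.2.1 = p.1.2.2) ∧ (p.2.1.1 = p.2.1.2 ∧ p.2.2.1 = p.2.2.2))) := by
    ext p
    simp only [Finset.mem_filter]
    constructor
    · rintro ⟨⟨h1, _⟩, h3⟩; exact ⟨h1, h3⟩
    · rintro ⟨h1, h3⟩
      refine ⟨⟨h1, ?_⟩, h3⟩
      obtain ⟨⟨ha, hb⟩, hc, hd⟩ := h3
      exact ⟨1, one_ne_zero, by simp [sub_eq_zero.mpr ha, sub_eq_zero.mpr hb],
        by simp [sub_eq_zero.mpr hc, sub_eq_zero.mpr hd]⟩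
  have hDegcard : ((((E ×ˢ E) ×ˢ (E ×ˢ E)) ×ˢ ((E ×ˢ E) ×ˢ (E ×ˢ E))).filter
      (fun p => ((p.1.1.1 = p.1.1.2 ∧ p.1.2.1 = p.1.2.2) ∧
        (p.2.1.1 = p.2.1.2 ∧ p.2.2.1 = p.2.2.2)))).card = E.card ^ 4 := by
    rw [Finset.filter_product
      (fun x : ((Fin 2 → Fq) × (Fin 2 → Fq)) × ((Fin 2 → Fq) × (Fin 2 → Fq)) =>
        x.1.1 = x.1.2 ∧ x.2.1 = x.2.2)
      (fun x : ((Fin 2 → Fq) × (Fin 2 → Fq)) × ((Fin 2 → Fq) × (Fin 2 → Fq)) =>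
        x.1.1 = x.1.2 ∧ x.2.1 = x.2.2), Finset.card_product]
    rw [Finset.filter_product
      (fun x : (Fin 2 → Fq) × (Fin 2 → Fq) => x.1 = x.2)
      (fun x : (Fin 2 → Fq) × (Fin 2 → Fq) => x.1 = x.2), Finset.card_product]
    have hdiag : ((E ×ˢ E).filter (fun x : (Fin 2 → Fq) × (Fin 2 → Fq) => x.1 = x.2))
        = E.diag := by
      ext x
      simp only [Finset.mem_filter, Finset.mem_product, Finset.mem_diag]
      constructor
      · rintro ⟨⟨h1, _⟩, h3⟩; exact ⟨h1, h3⟩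
      · rintro ⟨h1, h3⟩; exact ⟨⟨h1, h3 ▸ h1⟩, h3⟩
    rw [hdiag, Finset.diag_card]
    ring
  -- compute the two parts of the split sum
  rw [hDegset] at hsplit
  have htot : (∑ l ∈ Finset.univ.erase (0:Fq),
        ((((E ×ˢ E) ×ˢ (E ×ˢ E)).filter
          (fun p => p.1.1 - p.1.2 = l • (p.2.1 - p.2.2))).card *
         (((E ×ˢ E) ×ˢ (E ×ˢ E)).filter
          (fun p => p.1.1 - p.1.2 = l • (p.2.1 - p.2.2))).card))
      = ∑ p ∈ ((((E ×ˢ E) ×ˢ (E ×ˢ E)) ×ˢ ((E ×ˢ E) ×ˢ (E ×ˢ E))).filter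
        (fun p => ∃ lam : Fq, lam ≠ 0 ∧
          p.1.1.1 - p.1.1.2 = lam • (p.1.2.1 - p.1.2.2) ∧
          p.2.1.1 - p.2.1.2 = lam • (p.2.2.1 - p.2.2.2))),
          ((Finset.univ.erase (0:Fq)).filter
            (fun l => (p.1.1.1 - p.1.1.2 = l • (p.1.2.1 - p.1.2.2)) ∧
                      (p.2.1.1 - p.2.1.2 = l • (p.2.2.1 - p.2.2.2)))).card := by
    rw [Finset.sum_congr rfl (fun l _ => step1 l), step2, step3]
  have hA : (∑ p ∈ ((((E ×ˢ E) ×ˢ (E ×ˢ E)) ×ˢ ((E ×ˢ E) ×ˢ (E ×ˢ E))).filter (fun p => ((p.1.1.1 = p.1.1.2 ∧ p.1.2.1 = p.1.2.2) ∧ (p.2.1.1 = p.2.1.2 ∧ p.2.2.1 = p.2.2.2)))), ((Finset.univ.erase (0:Fq)).filter (fun l => (p.1.1.1 - p.1.1.2 = l • (p.1.2.1 - p.1.2.2)) ∧ (p.2.1.1 - p.2.1.2 = l • (p.2.2.1 - p.2.2.2)))).card) = (Fintype.card Fq - 1) * E.card ^ 4 := by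
    have h1 : (∑ p ∈ ((((E ×ˢ E) ×ˢ (E ×ˢ E)) ×ˢ ((E ×ˢ E) ×ˢ (E ×ˢ E))).filter (fun p => ((p.1.1.1 = p.1.1.2 ∧ p.1.2.1 = p.1.2.2) ∧ (p.2.1.1 = p.2.1.2 ∧ p.2.2.1 = p.2.2.2)))), ((Finset.univ.erase (0:Fq)).filter (fun l => (p.1.1.1 - p.1.1.2 = l • (p.1.2.1 - p.1.2.2)) ∧ (p.2.1.1 - p.2.1.2 = l • (p.2.2.1 - p.2.2.2)))).card) = ∑ p ∈ ((((E ×ˢ E) ×ˢ (E ×ˢ E)) ×ˢ ((E ×ˢ E) ×ˢ (E ×ˢ E))).filter (fun p => ((p.1.1.1 = p.1.1.2 ∧ p.1.2.1 = p.1.2.2) ∧ (p.2.1.1 = p.2.1.2 ∧ p.2.2.1 = p.2.2.2)))), (Fintype.card Fq - 1) :=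
      Finset.sum_congr rfl (fun p hp => hdegn p (Finset.mem_filter.mp hp).2)
    rw [h1, Finset.sum_const, smul_eq_mul, hDegcard, Nat.mul_comm]
  have hB : (∑ p ∈ (((((E ×ˢ E) ×ˢ (E ×ˢ E)) ×ˢ ((E ×ˢ E) ×ˢ (E ×ˢ E))).filter (fun p => ∃ lam : Fq, lam ≠ 0 ∧ p.1.1.1 - p.1.1.2 = lam • (p.1.2.1 - p.1.2.2) ∧ p.2.1.1 - p.2.1.2 = lam • (p.2.2.1 - p.2.2.2))).filter (fun p => ¬ ((p.1.1.1 = p.1.1.2 ∧ p.1.2.1 = p.1.2.2) ∧ (p.2.1.1 = p.2.1.2 ∧ p.2.2.1 = p.2.2.2)))), ((Finset.univ.erase (0:Fq)).filter (fun l => (p.1.1.1 - p.1.1.2 = l • (p.1.2.1 - p.1.2.2)) ∧ (p.2.1.1 - p.2.1.2 = l • (p.2.2.1 - p.2.2.2)))).card) = (((((E ×ˢ E) ×ˢ (E ×ˢ E)) ×ˢ ((E ×ˢ E) ×ˢ (E ×ˢ E))).filter (fun p => ∃ lam : Fq, lam ≠ 0 ∧ p.1.1.1 - p.1.1.2 =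 lam • (p.1.2.1 - p.1.2.2) ∧ p.2.1.1 - p.2.1.2 = lam • (p.2.2.1 - p.2.2.2))).filter (fun p => ¬ ((p.1.1.1 = p.1.1.2 ∧ p.1.2.1 = p.1.2.2) ∧ (p.2.1.1 = p.2.1.2 ∧ p.2.2.1 = p.2.2.2)))).card := by
    rw [Finset.card_eq_sum_ones]
    exact Finset.sum_congr rfl (fun p hp => huniq p (Finset.mem_filter.mp hp).1 (Finset.mem_filter.mp hp).2)
  have hcards := Finset.card_filter_add_card_filter_not (s := ((((E ×ˢ E) ×ˢ (E ×ˢ E)) ×ˢ ((E ×ˢ E) ×ˢ (E ×ˢ E))).filter (fun p => ∃ lam : Fq, lam ≠ 0 ∧ p.1.1.1 - p.1.1.2 = lam • (p.1.2.1 - p.1.2.2) ∧ p.2.1.1 - p.2.1.2 = lam • (p.2.2.1 - p.2.2.2)))) (p := (fun p => ((p.1.1.1 = p.1.1.2 ∧ p.1.2.1 = p.1.2.2) ∧ (p.2.1.1 = p.2.1.2 ∧ p.2.2.1 = p.2.2.2))))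
  rw [hDegset, hDegcard] at hcards
  have h2 : 2 ≤ Fintype.card Fq := Fintype.one_lt_card
  omega

end Aux

set_option maxHeartbeats 2000000 in
theorem stmt_9 :
    ∃ C : ℝ, 0 < C ∧
      ∀ (Fq : Type) [Field Fq] [Fintype Fq], ∀ (E : Finset (Fin 2 → Fq)),
        |((((((E ×ˢ E) ×ˢ (E ×ˢ E)) ×ˢ ((E ×ˢ E) ×ˢ (E ×ˢ E))).filter
            (fun p => ∃ lam : Fq, lam ≠ 0 ∧
              p.1.1.1 - p.1.1.2 = lam • (p.1.2.1 - p.1.2.2) ∧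
              p.2.1.1 - p.2.1.2 = lam • (p.2.2.1 - p.2.2.2))).card : ℝ)) -
          (E.card : ℝ) ^ 8 / (Fintype.card Fq : ℝ) ^ 3| ≤
        C * ((E.card : ℝ) ^ 6 + (Fintype.card Fq : ℝ) ^ 2 * (E.card : ℝ) ^ 5) := by
  refine ⟨3, by norm_num, ?_⟩
  intro Fq _ _ E
  by_cases hE : E = ∅
  · subst hE
    simp only [Finset.product_empty, Finset.empty_product, Finset.filter_empty,
      Finset.card_empty, Nat.cast_zero]
    norm_num
  have h2q : 2 ≤ Fintype.card Fq := Fintype.one_lt_card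
  have hq2 : (2:ℝ) ≤ ((Fintype.card Fq : ℝ)) := by exact_mod_cast h2q
  have hQ0 : (0:ℝ) < ((Fintype.card Fq : ℝ)) := by linarith
  have hn1 : (1:ℝ) ≤ ((E.card : ℝ)) := by
    have : 1 ≤ E.card := Finset.card_pos.mpr (Finset.nonempty_of_ne_empty hE)
    exact_mod_cast this
  have hnQ : ((E.card : ℝ)) ≤ ((Fintype.card Fq : ℝ))^2 := by
    have h1 : E.card ≤ Fintype.card (Fin 2 → Fq) := Finset.card_le_univ E
    have h2 : Fintype.card (Fin 2 → Fq) = Fintype.card Fq ^ 2 := by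
      simp [Fintype.card_fun]
    rw [h2] at h1
    exact_mod_cast h1
  -- key identity
  have hkey : ∀ l : Fq, ((Fintype.card Fq : ℝ))^2 * (((((E ×ˢ E) ×ˢ (E ×ˢ E)).filter (fun p => p.1.1 - p.1.2 = l • (p.2.1 - p.2.2))).card) : ℝ) = ((E.card : ℝ))^4 + (∑ ξ ∈ Finset.univ.erase (0 : Fin 2 → Fq), Complex.normSq (Eh E ξ) * Complex.normSq (Eh E (l • ξ))) := by
    intro l
    have h1 := key (Fq := Fq) E l
    have h2 := Finset.add_sum_erase Finset.univ
      (fun ξ => Complex.normSq (Eh E ξ) * Complex.normSq (Eh E (l • ξ)))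
      (Finset.mem_univ (0 : Fin 2 → Fq))
    rw [h1, ← h2]
    simp only [smul_zero, F_zero]
    ring
  have hSnn : ∀ l : Fq, 0 ≤ (∑ ξ ∈ Finset.univ.erase (0 : Fin 2 → Fq), Complex.normSq (Eh E ξ) * Complex.normSq (Eh E (l • ξ))) := by
    intro l
    exact Finset.sum_nonneg fun ξ _ => mul_nonneg (F_nonneg E ξ) (F_nonneg E _)
  have hSle : ∀ l : Fq, l ≠ 0 → (∑ ξ ∈ Finset.univ.erase (0 : Fin 2 → Fq), Complex.normSq (Eh E ξ) * Complex.normSq (Eh E (l • ξ))) ≤ ((E.card : ℝ))^2*(((Fintype.card Fq : ℝ))^2*((E.card : ℝ))) := by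
    intro l hl
    calc (∑ ξ ∈ Finset.univ.erase (0 : Fin 2 → Fq), Complex.normSq (Eh E ξ) * Complex.normSq (Eh E (l • ξ))) ≤ ∑ ξ ∈ Finset.univ.erase (0 : Fin 2 → Fq),
          ((E.card : ℝ))^2 * Complex.normSq (Eh E (l • ξ)) := by
          refine Finset.sum_le_sum fun ξ _ => ?_
          exact mul_le_mul_of_nonneg_right (F_le E ξ) (F_nonneg E _)
      _ ≤ ∑ ξ : Fin 2 → Fq, ((E.card : ℝ))^2 * Complex.normSq (Eh E (l • ξ)) := by
          refine Finset.sum_le_sum_of_subset_of_nonneg (Finset.subset_univ _) fun ξ _ _ => ?_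
          exact mul_nonneg (by positivity) (F_nonneg E _)
      _ = ((E.card : ℝ))^2 * ∑ ξ : Fin 2 → Fq, Complex.normSq (Eh E (l • ξ)) := by
          rw [Finset.mul_sum]
      _ = ((E.card : ℝ))^2 * ∑ ξ : Fin 2 → Fq, Complex.normSq (Eh E ξ) := by
          rw [reindex_smul (fun ξ => Complex.normSq (Eh E ξ)) hl]
      _ = ((E.card : ℝ))^2 * (((Fintype.card Fq : ℝ))^2*((E.card : ℝ))) := by rw [planch E]
  have hS1nn : 0 ≤ (∑ l ∈ Finset.univ.erase (0:Fq), (∑ ξ ∈ Finset.univ.erase (0 : Fin 2 → Fq), Complex.normSq (Eh E ξ) * Complex.normSq (Eh E (l • ξ)))) := Finset.sum_nonneg fun l _ => hSnn l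
  have hS1 : (∑ l ∈ Finset.univ.erase (0:Fq), (∑ ξ ∈ Finset.univ.erase (0 : Fin 2 → Fq), Complex.normSq (Eh E ξ) * Complex.normSq (Eh E (l • ξ)))) ≤ (((Fintype.card Fq : ℝ))^2*((E.card : ℝ)))*(((Fintype.card Fq : ℝ))^2*((E.card : ℝ))) := by
    rw [Finset.sum_comm]
    calc (∑ ξ ∈ Finset.univ.erase (0 : Fin 2 → Fq), ∑ l ∈ Finset.univ.erase (0:Fq),
          Complex.normSq (Eh E ξ) * Complex.normSq (Eh E (l • ξ)))
        ≤ ∑ ξ ∈ Finset.univ.erase (0 : Fin 2 → Fq),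
            Complex.normSq (Eh E ξ) * (((Fintype.card Fq : ℝ))^2*((E.card : ℝ))) := by
          refine Finset.sum_le_sum fun ξ hξ => ?_
          have hξ0 : ξ ≠ 0 := (Finset.mem_erase.mp hξ).1
          rw [← Finset.mul_sum]
          refine mul_le_mul_of_nonneg_left ?_ (F_nonneg E ξ)
          calc (∑ l ∈ Finset.univ.erase (0:Fq), Complex.normSq (Eh E (l • ξ)))
              ≤ ∑ l : Fq, Complex.normSq (Eh E (l • ξ)) := by
                refine Finset.sum_le_sum_of_subset_of_nonneg (Finset.subset_univ _)
                  fun l _ _ => F_nonneg E _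
            _ ≤ ∑ η : Fin 2 → Fq, Complex.normSq (Eh E η) :=
                sum_smul_le (fun η => Complex.normSq (Eh E η)) (fun η => F_nonneg E η) hξ0
            _ = ((Fintype.card Fq : ℝ))^2*((E.card : ℝ)) := planch E
      _ = (∑ ξ ∈ Finset.univ.erase (0 : Fin 2 → Fq), Complex.normSq (Eh E ξ)) * (((Fintype.card Fq : ℝ))^2*((E.card : ℝ))) := by
          rw [Finset.sum_mul]
      _ ≤ (∑ ξ : Fin 2 → Fq, Complex.normSq (Eh E ξ)) * (((Fintype.card Fq : ℝ))^2*((E.card : ℝ))) := by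
          refine mul_le_mul_of_nonneg_right ?_ (by positivity)
          exact Finset.sum_le_sum_of_subset_of_nonneg (Finset.subset_univ _)
            fun ξ _ _ => F_nonneg E ξ
      _ = (((Fintype.card Fq : ℝ))^2*((E.card : ℝ)))*(((Fintype.card Fq : ℝ))^2*((E.card : ℝ))) := by rw [planch E]
  have hS2nn : 0 ≤ (∑ l ∈ Finset.univ.erase (0:Fq), (∑ ξ ∈ Finset.univ.erase (0 : Fin 2 → Fq), Complex.normSq (Eh E ξ) * Complex.normSq (Eh E (l • ξ)))^2) := Finset.sum_nonneg fun l _ => by positivity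
  have hS2le : (∑ l ∈ Finset.univ.erase (0:Fq), (∑ ξ ∈ Finset.univ.erase (0 : Fin 2 → Fq), Complex.normSq (Eh E ξ) * Complex.normSq (Eh E (l • ξ)))^2) ≤ (((E.card : ℝ))^2*(((Fintype.card Fq : ℝ))^2*((E.card : ℝ)))) * (∑ l ∈ Finset.univ.erase (0:Fq), (∑ ξ ∈ Finset.univ.erase (0 : Fin 2 → Fq), Complex.normSq (Eh E ξ) * Complex.normSq (Eh E (l • ξ)))) := by
    rw [Finset.mul_sum]
    refine Finset.sum_le_sum fun l hl => ?_
    have hl0 : l ≠ 0 := (Finset.mem_erase.mp hl).1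
    have h1 := hSle l hl0
    have h2 := hSnn l
    nlinarith [h1, h2]
  have hcardB : ((Finset.univ.erase (0:Fq)).card : ℝ) = ((Fintype.card Fq : ℝ)) - 1 := by
    rw [Finset.card_erase_of_mem (Finset.mem_univ _), Finset.card_univ]
    have h1 : 1 ≤ Fintype.card Fq := by omega
    push_cast [Nat.cast_sub h1]
    ring
  have hQ4W : ((Fintype.card Fq : ℝ))^4 * (∑ l ∈ Finset.univ.erase (0:Fq), ((((E ×ˢ E) ×ˢ (E ×ˢ E)).filter (fun p => p.1.1 - p.1.2 = l • (p.2.1 - p.2.2))).card : ℝ)^2) = (((Fintype.card Fq : ℝ))-1)*((E.card : ℝ))^8 + 2*((E.card : ℝ))^4*(∑ l ∈ Finset.univ.erase (0:Fq), (∑ ξ ∈ Finset.univ.erase (0 : Fin 2 → Fq), Complex.normSq (Eh E ξ) * Complex.normSq (Eh E (l • ξ)))) + (∑ l ∈ Finset.univ.erase (0:Fq), (∑ ξ ∈ Finset.univ.erase (0 : Fin 2 → Fq), Complex.normSq (Eh E ξ) * Complex.normSq (Eh E (l • ξ)))^2) := by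
    rw [Finset.mul_sum]
    have hpt : ∀ l ∈ Finset.univ.erase (0:Fq),
        ((Fintype.card Fq : ℝ))^4 * (((((E ×ˢ E) ×ˢ (E ×ˢ E)).filter (fun p => p.1.1 - p.1.2 = l • (p.2.1 - p.2.2))).card:ℝ))^2 = ((E.card : ℝ))^8 + 2*((E.card : ℝ))^4*(∑ ξ ∈ Finset.univ.erase (0 : Fin 2 → Fq), Complex.normSq (Eh E ξ) * Complex.normSq (Eh E (l • ξ))) + (∑ ξ ∈ Finset.univ.erase (0 : Fin 2 → Fq), Complex.normSq (Eh E ξ) * Complex.normSq (Eh E (l • ξ)))^2 := by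
      intro l _
      have h1 := hkey l
      have h2 : ((Fintype.card Fq : ℝ))^4 * (((((E ×ˢ E) ×ˢ (E ×ˢ E)).filter (fun p => p.1.1 - p.1.2 = l • (p.2.1 - p.2.2))).card:ℝ))^2 = (((Fintype.card Fq : ℝ))^2 * (((((E ×ˢ E) ×ˢ (E ×ˢ E)).filter (fun p => p.1.1 - p.1.2 = l • (p.2.1 - p.2.2))).card:ℝ)))^2 := by ring
      rw [h2, h1]
      ring
    rw [Finset.sum_congr rfl hpt]
    rw [Finset.sum_add_distrib, Finset.sum_add_distrib, Finset.sum_const,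
      nsmul_eq_mul, hcardB, ← Finset.mul_sum]
  -- counting identity over ℝ
  have hcR : (∑ l ∈ Finset.univ.erase (0:Fq), ((((E ×ˢ E) ×ˢ (E ×ˢ E)).filter (fun p => p.1.1 - p.1.2 = l • (p.2.1 - p.2.2))).card : ℝ)^2) + ((E.card : ℝ))^4 = ((((((E ×ˢ E) ×ˢ (E ×ˢ E)) ×ˢ ((E ×ˢ E) ×ˢ (E ×ˢ E))).filter
            (fun p => ∃ lam : Fq, lam ≠ 0 ∧
              p.1.1.1 - p.1.1.2 = lam • (p.1.2.1 - p.1.2.2) ∧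
              p.2.1.1 - p.2.1.2 = lam • (p.2.2.1 - p.2.2.2))).card : ℝ)) + (((Fintype.card Fq : ℝ))-1)*((E.card : ℝ))^4 := by
    have hc := count_id E
    have h1 : 1 ≤ Fintype.card Fq := by omega
    have hcast := congrArg (fun k : ℕ => (k:ℝ)) hc
    push_cast [Nat.cast_sub h1] at hcast
    simp only [← pow_two] at hcast
    linarith [hcast]
  clear hkey hSnn hSle hcardB
  set Q : ℝ := ((Fintype.card Fq : ℝ)) with hQdef
  set n : ℝ := ((E.card : ℝ)) with hndef
  set W : ℝ := (∑ l ∈ Finset.univ.erase (0:Fq), ((((E ×ˢ E) ×ˢ (E ×ˢ E)).filter (fun p => p.1.1 - p.1.2 = l • (p.2.1 - p.2.2))).card : ℝ)^2) with hWdef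
  set S1 : ℝ := (∑ l ∈ Finset.univ.erase (0:Fq), (∑ ξ ∈ Finset.univ.erase (0 : Fin 2 → Fq), Complex.normSq (Eh E ξ) * Complex.normSq (Eh E (l • ξ)))) with hS1def
  set S2 : ℝ := (∑ l ∈ Finset.univ.erase (0:Fq), (∑ ξ ∈ Finset.univ.erase (0 : Fin 2 → Fq), Complex.normSq (Eh E ξ) * Complex.normSq (Eh E (l • ξ)))^2) with hS2def
  set Cd : ℝ := ((((((E ×ˢ E) ×ˢ (E ×ˢ E)) ×ˢ ((E ×ˢ E) ×ˢ (E ×ˢ E))).filter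
            (fun p => ∃ lam : Fq, lam ≠ 0 ∧
              p.1.1.1 - p.1.1.2 = lam • (p.1.2.1 - p.1.2.2) ∧
              p.2.1.1 - p.2.1.2 = lam • (p.2.2.1 - p.2.2.2))).card : ℝ)) with hCddef
  clear_value Q n W S1 S2 Cd
  clear hWdef hS1def hS2def hCddef hQdef hndef
  have hQ4 : (0:ℝ) < Q^4 := by positivity
  have hX0 : 0 ≤ Q^4 * W - (Q-1)*n^8 := by
    have h1 : 0 ≤ 2*n^4*S1 := mul_nonneg (by positivity) hS1nn
    linarith [hQ4W, h1, hS2nn]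
  have hXle : Q^4 * W - (Q-1)*n^8 ≤ Q^4*(2*n^6 + Q^2*n^5) := by
    have h1 := mul_le_mul_of_nonneg_left hS1 (show (0:ℝ) ≤ 2*n^4 by positivity)
    have h2 := mul_le_mul_of_nonneg_left hS1 (show (0:ℝ) ≤ n^2*(Q^2*n) by positivity)
    nlinarith [hQ4W, hS2le, h1, h2]
  have hb1 : n^8 ≤ Q^4*n^6 := by
    have h1 : n*n ≤ Q^2*Q^2 := mul_le_mul hnQ hnQ (by linarith) (by positivity)
    have h2 := mul_le_mul_of_nonneg_left h1 (show (0:ℝ) ≤ n^6 by positivity)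
    nlinarith [h2]
  have hQn : Q - 2 ≤ Q^2*n := by
    have h0 : (0:ℝ) ≤ Q*(Q-2) := mul_nonneg (by linarith) (by linarith)
    have h0b := mul_le_mul_of_nonneg_left hn1 (sq_nonneg Q)
    nlinarith [h0, h0b, hq2]
  have hb2 : (Q-2)*(Q^4*n^4) ≤ Q^4*(Q^2*n^5) := by
    have h1 := mul_le_mul_of_nonneg_right hQn (show (0:ℝ) ≤ Q^4*n^4 by positivity)
    nlinarith [h1]
  have hb2nn : 0 ≤ (Q-2)*(Q^4*n^4) := mul_nonneg (by linarith) (by positivity)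
  have hexp : (Cd - n^8/Q^3) * Q^4 = (Q^4 * W - (Q-1)*n^8) - n^8 - (Q-2)*(Q^4*n^4) := by
    have hCard : Cd = W - (Q-2)*n^4 := by linarith [hcR]
    rw [hCard]
    field_simp
    ring
  rw [abs_le]
  constructor
  · rw [← mul_le_mul_iff_of_pos_right hQ4, hexp]
    have hp1 : (0:ℝ) ≤ Q^4*n^6 := by positivity
    have hp2 : (0:ℝ) ≤ Q^4*(Q^2*n^5) := by positivity
    nlinarith [hX0, hb1, hb2, hp1, hp2]
  · rw [← mul_le_mul_iff_of_pos_right hQ4, hexp]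
    have hp0 : (0:ℝ) ≤ n^8 := by positivity
    nlinarith [hXle, hb2nn, hp0]
end

section
/- Let q be a prime power and A ⊆ 𝔽_q with |A| ≥ Cq^{1/2} for a sufficiently large absolute constant C. Then (A−A)/(A−A) = 𝔽_q, i.e., every element of 𝔽_q can be written as (a−b)/(c−d) with a,b,c,d ∈ A and c ≠ d. -/
theorem stmt_10 :
    ∃ C : ℝ, 0 < C ∧
      ∀ (Fq : Type) [Field Fq] [Fintype Fq], ∀ (A : Finset Fq),
        (C * (Fintype.card Fq : ℝ) ^ ((1 : ℝ) / 2) ≤ (A.card : ℝ)) →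
        ∀ x : Fq, ∃ a ∈ A, ∃ b ∈ A, ∃ c ∈ A, ∃ d ∈ A,
          c ≠ d ∧ x = (a - b) / (c - d) := by
  refine ⟨2, by norm_num, fun Fq _ _ A hA x => ?_⟩
  set q := Fintype.card Fq with hq
  have hq1 : 1 ≤ (q : ℝ) := by
    have : 0 < q := Fintype.card_pos
    exact_mod_cast this
  have hsqrt : ((q : ℝ) ^ ((1 : ℝ)/2)) = Real.sqrt q := (Real.sqrt_eq_rpow _).symm
  have hs1 : 1 ≤ Real.sqrt q := Real.one_le_sqrt.mpr hq1
  have hA2 : 2 ≤ A.card := by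
    have : (2 : ℝ) ≤ A.card := by
      calc (2:ℝ) = 2 * 1 := by ring
      _ ≤ 2 * Real.sqrt q := by linarith
      _ ≤ A.card := by rw [hsqrt] at hA; exact hA
    exact_mod_cast this
  have hcard : q < A.card * A.card := by
    have hsq : Real.sqrt q * Real.sqrt q = q := Real.mul_self_sqrt (by linarith)
    have h2 : 2 * Real.sqrt q ≤ (A.card : ℝ) := by rw [hsqrt] at hA; exact hA
    have : (q : ℝ) < (A.card : ℝ) * A.card := by nlinarith
    exact_mod_cast this
  -- get two distinct elements of A
  obtain ⟨c0, hc0, d0, hd0, hcd0⟩ := Finset.one_lt_card.mp hA2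
  obtain ⟨a0, ha0⟩ := Finset.card_pos.mp (by omega : 0 < A.card)
  by_cases hx : x = 0
  · exact ⟨a0, ha0, a0, ha0, c0, hc0, d0, hd0, hcd0, by simp [hx]⟩
  · have hmap : ∀ p ∈ A ×ˢ A, (p.1 - x * p.2) ∈ (Finset.univ : Finset Fq) :=
      fun p _ => Finset.mem_univ _
    have hlt : (Finset.univ : Finset Fq).card < (A ×ˢ A).card := by
      rw [Finset.card_univ, Finset.card_product]; exact hcard
    obtain ⟨p, hp, p', hp', hne, heq⟩ :=
      Finset.exists_ne_map_eq_of_card_lt_of_maps_to hlt hmap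
    simp only [Finset.mem_product] at hp hp'
    have hcc : p.2 ≠ p'.2 := by
      intro h
      apply hne
      have : p.1 = p'.1 := by
        have := heq
        rw [h] at this
        linear_combination this
      exact Prod.ext this h
    refine ⟨p.1, hp.1, p'.1, hp'.1, p.2, hp.2, p'.2, hp'.2, hcc, ?_⟩
    field_simp [sub_ne_zero.mpr hcc]
    linear_combination -heq
end

section
/- Let q be a prime power, E ⊆ 𝔽_q², and ξ₁, ξ₂ ∈ 𝔽_q² \ {0}. Then ∑_{λ ∈ 𝔽_q} |Ê(λξ₁)|² |Ê(λξ₂)|² ≤ C|E|³/q⁶ for an absolute constant C. -/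
/-!
The pointwise bound `‖Ê‖ ≤ |E| / q²` disposes of the first factor. Since `ξ₂ ≠ 0`, the points
`λ ξ₂` are distinct, so the remaining sum `∑_λ ‖Ê(λ ξ₂)‖²` is at most the full Plancherel sum
`∑_ξ ‖Ê(ξ)‖² = |E| / q²`.
-/

open Finset

section DotProduct
variable {F ι : Type*} [Field F] [Fintype F] [Fintype ι] [DecidableEq ι]

lemma AddChar.sum_apply_dotProduct_eq_zero {χ : AddChar F ℂ} (hχ : χ ≠ 1) {a : ι → F}
    (ha : a ≠ 0) : ∑ ξ : ι → F, χ (a ⬝ᵥ ξ) = 0 := by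
  obtain ⟨i, hi⟩ := Function.ne_iff.mp ha
  obtain ⟨t, ht⟩ := AddChar.ne_one_iff.mp hχ
  let ψ := χ.compAddMonoidHom (AddMonoidHom.mk' (a ⬝ᵥ ·) (dotProduct_add a))
  have hψ : ψ ≠ 1 := AddChar.ne_one_iff.mpr
    ⟨Pi.single i (t / a i), by simpa [ψ, dotProduct_single, mul_div_cancel₀ _ hi] using ht⟩
  exact AddChar.sum_eq_zero_of_ne_one hψ

lemma AddChar.sum_norm_sum_apply_neg_dotProduct_sq {χ : AddChar F ℂ} (hχ : χ ≠ 1)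
    (E : Finset (ι → F)) :
    ∑ ξ : ι → F, ‖∑ x ∈ E, χ (-(x ⬝ᵥ ξ))‖ ^ 2 = #E * Fintype.card F ^ Fintype.card ι := by
  have hexpand : ∀ ξ : ι → F, (‖∑ x ∈ E, χ (-(x ⬝ᵥ ξ))‖ ^ 2 : ℂ) =
      ∑ x ∈ E, ∑ y ∈ E, χ ((y - x) ⬝ᵥ ξ) := by
    intro ξ
    simp_rw [← Complex.mul_conj', map_sum, ← AddChar.map_neg_eq_conj, neg_neg, sum_mul_sum,
      ← AddChar.map_add_eq_mul, sub_dotProduct, neg_add_eq_sub]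
  have hdiag : ∀ x ∈ E, ∑ y ∈ E, ∑ ξ : ι → F, χ ((y - x) ⬝ᵥ ξ) =
      Fintype.card F ^ Fintype.card ι := by
    intro x hx
    rw [sum_eq_single_of_mem x hx fun y _ hyx ↦
      AddChar.sum_apply_dotProduct_eq_zero hχ (sub_ne_zero.mpr hyx)]
    simp
  apply Complex.ofReal_injective
  push_cast
  calc ∑ ξ : ι → F, (‖∑ x ∈ E, χ (-(x ⬝ᵥ ξ))‖ ^ 2 : ℂ)
      = ∑ x ∈ E, ∑ y ∈ E, ∑ ξ : ι → F, χ ((y - x) ⬝ᵥ ξ) := by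
        simp_rw [hexpand, sum_comm (s := univ)]
    _ = #E * Fintype.card F ^ Fintype.card ι := by rw [sum_congr rfl hdiag]; simp

end DotProduct

lemma Fintype.sum_comp_smul_le_sum_of_nonneg {K V M : Type*} [DivisionRing K] [Fintype K]
    [AddCommGroup V] [Module K V] [Fintype V] [AddCommMonoid M] [PartialOrder M]
    [IsOrderedAddMonoid M] {f : V → M} (hf : ∀ w, 0 ≤ f w) {v : V} (hv : v ≠ 0) :
    ∑ c : K, f (c • v) ≤ ∑ w, f w := by
  simpa using sum_le_univ_sum_of_nonneg (s := univ.map ⟨(· • v), smul_left_injective K hv⟩) hf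

theorem stmt_15 :
    ∃ C : ℝ, 0 < C ∧
      ∀ (Fq : Type) [Field Fq] [Fintype Fq], ∀ (χ : AddChar Fq ℂ), χ ≠ 1 →
        ∀ (E : Finset (Fin 2 → Fq)) (ξ₁ ξ₂ : Fin 2 → Fq), ξ₁ ≠ 0 → ξ₂ ≠ 0 →
          ∀ (Ehat : (Fin 2 → Fq) → ℂ),
            (∀ ξ, Ehat ξ =
              (∑ x ∈ E, χ (-(∑ i, x i * ξ i))) / (Fintype.card Fq : ℂ) ^ 2) →
            ∑ lam : Fq, ‖Ehat (lam • ξ₁)‖ ^ 2 * ‖Ehat (lam • ξ₂)‖ ^ 2 ≤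
              C * (E.card : ℝ) ^ 3 / (Fintype.card Fq : ℝ) ^ 6 := by
  refine ⟨1, one_pos, fun Fq _ _ χ hχ E ξ₁ ξ₂ _ hξ₂ Ehat hE ↦ ?_⟩
  set q : ℝ := (Fintype.card Fq : ℝ)
  have hq : 0 < q := Nat.cast_pos.mpr Fintype.card_pos
  have hnorm (ξ) : ‖Ehat ξ‖ = ‖∑ x ∈ E, χ (-(x ⬝ᵥ ξ))‖ / q ^ 2 := by
    simp [hE, dotProduct, q]
  have hsup (ξ) : ‖Ehat ξ‖ ≤ #E / q ^ 2 := by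
    rw [hnorm]
    gcongr
    exact (norm_sum_le _ _).trans (by simp)
  have hline : ∑ lam : Fq, ‖Ehat (lam • ξ₂)‖ ^ 2 ≤ #E / q ^ 2 :=
    calc _ ≤ ∑ ξ, ‖Ehat ξ‖ ^ 2 :=
          Fintype.sum_comp_smul_le_sum_of_nonneg (fun _ ↦ by positivity) hξ₂
      _ = #E / q ^ 2 := by
        simp_rw [hnorm, div_pow, ← sum_div, AddChar.sum_norm_sum_apply_neg_dotProduct_sq hχ]
        field_simp
        simp [q]
  calc ∑ lam : Fq, ‖Ehat (lam • ξ₁)‖ ^ 2 * ‖Ehat (lam • ξ₂)‖ ^ 2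
      ≤ ∑ lam : Fq, (#E / q ^ 2) ^ 2 * ‖Ehat (lam • ξ₂)‖ ^ 2 := by
        gcongr
        exact hsup _
    _ = (#E / q ^ 2) ^ 2 * ∑ lam : Fq, ‖Ehat (lam • ξ₂)‖ ^ 2 := (mul_sum ..).symm
    _ ≤ (#E / q ^ 2) ^ 2 * (#E / q ^ 2) := by gcongr
    _ = 1 * #E ^ 3 / q ^ 6 := by field_simp
end

section
/- Let q be a prime power and E ⊆ 𝔽_q². Let N₀(E) = #{(a,b) ∈ E² : ‖a−b‖ = 0}, where ‖v‖ = v₁² + v₂². Then N₀(E) ≤ C(|E|²/q + q|E|) for an absolute constant C. In particular, if |E| ≥ Cq then N₀(E) ≤ C'|E|² with constant C' that can be made smaller than 1/2 for suitable C. -/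
/-! Fixing `a` and the first coordinate of `b`, the equation `(a₀ - b₀)² + (a₁ - b₁)² = 0` leaves
at most two values for `b₁`, so every `a` is at isotropic distance from at most `2q` points and
`N₀(E) ≤ 2q|E|`. Both claims follow from this trivial bound: it is dominated by `2(|E|²/q + q|E|)`,
and by `C'|E|²` once `|E| ≥ (2/C')q`. -/

open scoped Classical

open Finset

lemma card_filter_sq_eq_le_two {R : Type*} [CommRing R] [NoZeroDivisors R]
    (s : Finset R) (c : R) : #{z ∈ s | z ^ 2 = c} ≤ 2 := by
  rcases Finset.eq_empty_or_nonempty {z ∈ s | z ^ 2 = c} with hempty | ⟨z₀, hz₀⟩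
  · simp [hempty]
  have hsub : {z ∈ s | z ^ 2 = c} ⊆ {z₀, -z₀} := by
    intro z hz
    have hsq : z ^ 2 = z₀ ^ 2 := (mem_filter.mp hz).2.trans (mem_filter.mp hz₀).2.symm
    simpa using sq_eq_sq_iff_eq_or_eq_neg.mp hsq
  exact (card_le_card hsub).trans card_le_two

lemma card_isotropicCone_le {R : Type*} [CommRing R] [NoZeroDivisors R] [Fintype R] :
    #{v : Fin 2 → R | v 0 ^ 2 + v 1 ^ 2 = 0} ≤ 2 * Fintype.card R := by
  refine card_le_mul_card_image_of_maps_to (f := fun v => v 0) (t := univ)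
    (fun _ _ => mem_univ _) 2 fun x _ => ?_
  refine le_trans ?_ (card_filter_sq_eq_le_two univ (-x ^ 2))
  refine card_le_card_of_injOn (fun v => v 1) (fun v hv => ?_) fun v hv w hw hvw => ?_
  · rw [mem_coe, mem_filter, mem_filter] at hv
    refine mem_filter.mpr ⟨mem_univ _, ?_⟩
    rw [← hv.2]
    linear_combination hv.1.2
  · rw [mem_coe, mem_filter, mem_filter] at hv hw
    funext i
    fin_cases i
    · exact hv.2.trans hw.2.symm
    · exact hvw

lemma card_isotropicPairs_le {R : Type*} [CommRing R] [NoZeroDivisors R] [Fintype R]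
    (E : Finset (Fin 2 → R)) :
    #{p ∈ E ×ˢ E | (p.1 0 - p.2 0) ^ 2 + (p.1 1 - p.2 1) ^ 2 = 0}
      ≤ 2 * Fintype.card R * #E := by
  refine card_le_mul_card_image_of_maps_to (f := Prod.fst) (t := E)
    (fun p hp => (mem_product.mp (mem_filter.mp hp).1).1) _ fun a _ => ?_
  refine le_trans ?_ card_isotropicCone_le
  refine card_le_card_of_injOn (fun p => p.1 - p.2) (fun p hp => ?_) fun p hp r hr hpr => ?_
  · rw [mem_coe, mem_filter, mem_filter] at hp
    simpa using hp.1.2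
  · rw [mem_coe, mem_filter, mem_filter] at hp hr
    have hfst : p.1 = r.1 := hp.2.trans hr.2.symm
    exact Prod.ext hfst (by simpa [hfst] using hpr)

theorem stmt_16 :
    (∃ C : ℝ, 0 < C ∧
      ∀ (Fq : Type) [Field Fq] [Fintype Fq], ∀ (E : Finset (Fin 2 → Fq)),
        (((E ×ˢ E).filter
            (fun p => (p.1 0 - p.2 0) ^ 2 + (p.1 1 - p.2 1) ^ 2 = 0)).card : ℝ) ≤
          C * ((E.card : ℝ) ^ 2 / (Fintype.card Fq : ℝ) + (Fintype.card Fq : ℝ) * E.card)) ∧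
    (∀ C' : ℝ, 0 < C' →
      ∃ D : ℝ, 0 < D ∧
        ∀ (Fq : Type) [Field Fq] [Fintype Fq], ∀ (E : Finset (Fin 2 → Fq)),
          (D * (Fintype.card Fq : ℝ) ≤ (E.card : ℝ)) →
          (((E ×ˢ E).filter
              (fun p => (p.1 0 - p.2 0) ^ 2 + (p.1 1 - p.2 1) ^ 2 = 0)).card : ℝ) ≤
            C' * (E.card : ℝ) ^ 2) := by
  refine ⟨⟨2, two_pos, fun Fq _ _ E => ?_⟩, fun C' hC' => ⟨2 / C', by positivity, fun Fq _ _ E hE => ?_⟩⟩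
  · have hN := (Nat.cast_le (α := ℝ)).mpr (card_isotropicPairs_le E)
    push_cast at hN
    have hdiv : (0 : ℝ) ≤ (#E : ℝ) ^ 2 / Fintype.card Fq := by positivity
    linarith
  · have hN := (Nat.cast_le (α := ℝ)).mpr (card_isotropicPairs_le E)
    push_cast at hN
    have hq : 2 * (Fintype.card Fq : ℝ) ≤ C' * #E := by
      rwa [div_mul_eq_mul_div, div_le_iff₀' hC'] at hE
    calc _ ≤ 2 * (Fintype.card Fq : ℝ) * #E := hN
      _ ≤ C' * #E * #E := by gcongr
      _ = C' * (#E : ℝ) ^ 2 := by ring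
end
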